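/- arXiv:2110.09931 — 5 statements merged into one kernel-verified Lean document; each statement's English description precedes it below -/
import Mathlib

section
/- Let G be a connected simple graph with n vertices and m edges, let 0 = λ_1 < λ_2 ≤ ... ≤ λ_n be the eigenvalues of its Laplacian matrix, and let r_L(G) = λ_n/λ_2. Then BH(G) ≤ (n(n-1)²/(4(2m + M_1(G)))) · (r_L(G) + 1/r_L(G))². -/
/-!
The squares of the nonzero Laplacian eigenvalues `λ₂, …, λₙ` lie in `[λ₂², λₙ²]` and sum to
`trace (L²) = 2m + M₁(G)`, since `(L²)ᵥᵥ = d(v)² + d(v)`. Kantorovich's inequality for these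
`n - 1` numbers bounds `∑ 1/λᵢ²` by `(n - 1)² (λ₂² + λₙ²)² / (4 λ₂² λₙ² (2m + M₁))`, and
`(λ₂² + λₙ²)² / (λ₂² λₙ²) = (r_L + 1/r_L)²`.
-/

open Finset Polynomial

/-- The eigenvalues of the Laplacian matrix of `G` over `ℝ`, as produced (in no
particular order) by the spectral theorem for symmetric matrices. -/
noncomputable def lapEigsUnordered {V : Type*} [Fintype V] [DecidableEq V]
    (G : SimpleGraph V) [DecidableRel G.Adj] : V → ℝ :=
  (SimpleGraph.posSemidef_lapMatrix (R := ℝ) (G := G)).1.eigenvalues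

/-- `μ : Fin n → ℝ` lists the eigenvalues of the Laplacian matrix of `G`
in nondecreasing order (so, `0`-based, `μ ⟨0,_⟩ = λ₁ ≤ μ ⟨1,_⟩ = λ₂ ≤ ⋯`). -/
def IsLapEigSeq {V : Type*} [Fintype V] [DecidableEq V] (G : SimpleGraph V)
    [DecidableRel G.Adj] {n : ℕ} (μ : Fin n → ℝ) : Prop :=
  Monotone μ ∧ ∃ e : V ≃ Fin n, ∀ v, lapEigsUnordered G v = μ (e v)

theorem Matrix.IsHermitian.trace_mul_self {𝕜 n : Type*} [RCLike 𝕜] [Fintype n] [DecidableEq n]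
    {A : Matrix n n 𝕜} (hA : A.IsHermitian) :
    (A * A).trace = ∑ i, ((hA.eigenvalues i ^ 2 : ℝ) : 𝕜) := by
  set U : Matrix n n 𝕜 := (hA.eigenvectorUnitary : Matrix n n 𝕜)
  set D := Matrix.diagonal (RCLike.ofReal ∘ hA.eigenvalues : n → 𝕜)
  have hU : star U * U = 1 := Unitary.coe_star_mul_self hA.eigenvectorUnitary
  have hA' : A = U * D * star U := hA.spectral_theorem
  conv_lhs => rw [hA']
  rw [show U * D * star U * (U * D * star U) = U * (D * D) * star U by
    simp only [mul_assoc, ← mul_assoc (star U) U, hU, one_mul],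
    Matrix.trace_mul_cycle, ← mul_assoc, hU, one_mul]
  simp [D, Matrix.diagonal_mul_diagonal, Matrix.trace_diagonal, sq]

theorem SimpleGraph.lapMatrix_mul_self_apply_self {V : Type*} [Fintype V] [DecidableEq V]
    (G : SimpleGraph V) [DecidableRel G.Adj] {R : Type*} [Ring R] (v : V) :
    (G.lapMatrix R * G.lapMatrix R) v v = (G.degree v : R) ^ 2 + G.degree v := by
  rw [SimpleGraph.lapMatrix, SimpleGraph.degMatrix, sub_mul, mul_sub, mul_sub]
  simp only [Matrix.sub_apply, Matrix.diagonal_mul_diagonal, Matrix.diagonal_mul,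
    Matrix.mul_diagonal, SimpleGraph.adjMatrix_apply, G.irrefl, if_false, zero_mul, mul_zero,
    SimpleGraph.adjMatrix_mul_self_apply_self, Matrix.diagonal_apply_eq, sub_zero, zero_sub,
    sub_neg_eq_add, sq]

theorem SimpleGraph.trace_lapMatrix_mul_self {V : Type*} [Fintype V] [DecidableEq V]
    (G : SimpleGraph V) [DecidableRel G.Adj] {R : Type*} [CommRing R] :
    (G.lapMatrix R * G.lapMatrix R).trace = 2 * #G.edgeFinset + ∑ v, (G.degree v : R) ^ 2 := by
  simp only [Matrix.trace, Matrix.diag, G.lapMatrix_mul_self_apply_self, sum_add_distrib]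
  rw [add_comm, ← Nat.cast_sum, G.sum_degrees_eq_twice_card_edges]
  push_cast; ring

/-- Kantorovich's inequality. -/
theorem Finset.sum_mul_sum_one_div_le_of_mem_Icc {ι : Type*} (s : Finset ι) {x : ι → ℝ}
    {a b : ℝ} (ha : 0 < a) (hb : 0 < b) (hx : ∀ i ∈ s, x i ∈ Set.Icc a b) :
    (∑ i ∈ s, x i) * ∑ i ∈ s, 1 / x i ≤ #s ^ 2 * (a + b) ^ 2 / (4 * (a * b)) := by
  -- `(x - a) (b - x) ≥ 0` bounds `1 / x` by a linear function of `x`, and AM-GM finishes.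
  have hinv : ∀ i ∈ s, 1 / x i ≤ (a + b - x i) / (a * b) := fun i hi => by
    obtain ⟨hax, hxb⟩ := hx i hi
    rw [div_le_div_iff₀ (ha.trans_le hax) (by positivity)]
    nlinarith [mul_nonneg (sub_nonneg.2 hax) (sub_nonneg.2 hxb)]
  set S := ∑ i ∈ s, x i
  have hS : 0 ≤ S := sum_nonneg fun i hi => ha.le.trans (hx i hi).1
  calc S * ∑ i ∈ s, 1 / x i
      ≤ S * ((#s * (a + b) - S) / (a * b)) := by
        gcongr
        refine (sum_le_sum hinv).trans_eq ?_
        rw [← sum_div, sum_sub_distrib, sum_const, nsmul_eq_mul]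
    _ ≤ #s ^ 2 * (a + b) ^ 2 / (4 * (a * b)) := by
        rw [mul_div_assoc', div_le_div_iff₀ (by positivity) (by positivity)]
        nlinarith [sq_nonneg (#s * (a + b) - 2 * S), mul_pos ha hb]

theorem IsLapEigSeq.sum_sq {V : Type*} [Fintype V] [DecidableEq V] {G : SimpleGraph V}
    [DecidableRel G.Adj] {n : ℕ} {μ : Fin n → ℝ} (hμ : IsLapEigSeq G μ) :
    ∑ i, μ i ^ 2 = 2 * #G.edgeFinset + ∑ v, (G.degree v : ℝ) ^ 2 := by
  obtain ⟨-, e, he⟩ := hμ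
  rw [← G.trace_lapMatrix_mul_self, (G.posSemidef_lapMatrix ℝ).1.trace_mul_self,
    ← e.sum_comp]
  simp [← he, lapEigsUnordered]

theorem div_add_div_sq_eq {K : Type*} [Field K] {a b : K} (ha : a ≠ 0) (hb : b ≠ 0) :
    (b / a + a / b) ^ 2 = (a ^ 2 + b ^ 2) ^ 2 / (a ^ 2 * b ^ 2) := by
  field_simp
  ring

theorem statement_0 {n : ℕ} (hn : 2 ≤ n) (G : SimpleGraph (Fin n)) [DecidableRel G.Adj]
    (μ : Fin n → ℝ) (hμ : IsLapEigSeq G μ)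
    (hμ1 : μ ⟨0, by omega⟩ = 0) (hμ2 : 0 < μ ⟨1, by omega⟩) :
    (n : ℝ) * ∑ i ∈ univ.filter (fun i : Fin n => 0 < i.val), 1 / μ i ^ 2 ≤
      ((n : ℝ) * ((n : ℝ) - 1) ^ 2 / (4 * (2 * (G.edgeFinset.card : ℝ) + ∑ v, ((G.degree v : ℝ)) ^ 2))) *
        (μ ⟨n - 1, by omega⟩ / μ ⟨1, by omega⟩ + μ ⟨1, by omega⟩ / μ ⟨n - 1, by omega⟩) ^ 2 := by
  set l₂ := μ ⟨1, by omega⟩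
  set lₙ := μ ⟨n - 1, by omega⟩
  set s : Finset (Fin n) := univ.erase ⟨0, by omega⟩
  have hs : univ.filter (fun i : Fin n => 0 < i.val) = s := by
    ext i
    simp [s, Fin.ext_iff, Nat.pos_iff_ne_zero]
  have hcard : (#s : ℝ) = n - 1 := by
    rw [card_erase_of_mem (mem_univ _), card_univ, Fintype.card_fin, Nat.cast_sub (by omega),
      Nat.cast_one]
  have hbounds : ∀ i ∈ s, μ i ^ 2 ∈ Set.Icc (l₂ ^ 2) (lₙ ^ 2) := fun i hi => by
    have h₂ : l₂ ≤ μ i := hμ.1 (Fin.mk_le_of_le_val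
      (Nat.one_le_iff_ne_zero.2 fun h => (mem_erase.1 hi).1 (Fin.ext h)))
    have hₙ : μ i ≤ lₙ := hμ.1 (Fin.le_def.2 (Nat.le_sub_one_of_lt i.isLt))
    exact ⟨pow_le_pow_left₀ hμ2.le h₂ 2, pow_le_pow_left₀ (hμ2.le.trans h₂) hₙ 2⟩
  have hsum : ∑ i ∈ s, μ i ^ 2 = 2 * #G.edgeFinset + ∑ v, (G.degree v : ℝ) ^ 2 := by
    rw [sum_erase _ (by simp [hμ1]), hμ.sum_sq]
  have hlₙ : 0 < lₙ := hμ2.trans_le (hμ.1 (Fin.le_def.2 (by simp; omega)))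
  have hpos : 0 < ∑ i ∈ s, μ i ^ 2 := (pow_pos hμ2 2).trans_le
    (single_le_sum (fun i _ => sq_nonneg (μ i)) (mem_erase.2 ⟨by simp [Fin.ext_iff], mem_univ _⟩))
  have hK := sum_mul_sum_one_div_le_of_mem_Icc s (pow_pos hμ2 2) (pow_pos hlₙ 2) hbounds
  rw [← le_div_iff₀' hpos] at hK
  rw [hs, ← hsum, div_add_div_sq_eq hμ2.ne' hlₙ.ne', ← hcard]
  refine (mul_le_mul_of_nonneg_left hK (Nat.cast_nonneg n)).trans_eq ?_
  field_simp
end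

section
/- Let G be a connected simple graph with n ≥ 3 vertices and Laplacian eigenvalues 0 = λ_1 < λ_2 ≤ ... ≤ λ_n, and let P = Π_{i=2}^{n} λ_i (which equals n·τ(G), where τ(G) is the number of spanning trees of G). Then Kf(G)²/(n(n−2)) − (n(n−1)/(n−2))·(1/P)^{2/(n−1)} ≤ BH(G) ≤ Kf(G)²/n − n(n−1)(n−2)·(1/P)^{2/(n−1)}. -/
/-! With `b i = 1 / λ i` for `i ≥ 2`, we have `Kf = n ∑ b`, `BH = n ∑ b²` and `∏ b = 1 / P`,
so both bounds are inequalities between the sum, the sum of squares and the geometric mean `γ`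
of `m = n - 1` positive reals:
`m (m - 1) γ² + ∑ b² ≤ (∑ b)² ≤ (m - 1) ∑ b² + m γ²`.
Both sides are homogeneous of degree 2, so we may assume `γ = 1`. The left inequality is then
AM-GM for the `m (m - 1)` products `b i * b j`, `i ≠ j`. The right one is proved by smoothing:
replacing two entries `u ≥ 1 ≥ v` by the single entry `u v` keeps the product equal to `1` and
can only decrease the slack `(m - 1) ∑ b² + m - (∑ b)²`, so induction on `m` reduces it to
`m ≤ 1`. -/

open Finset Polynomial

namespace Multiset

lemma exists_one_le_of_prod_eq_one {M : Multiset ℝ} (hM : M ≠ 0) (hpos : ∀ x ∈ M, 0 < x)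
    (hprod : M.prod = 1) : ∃ u ∈ M, 1 ≤ u := by
  by_contra! h
  simpa [hprod] using prod_map_lt_prod_map hM id (fun _ ↦ 1) hpos h

lemma exists_le_one_of_prod_le_one {M : Multiset ℝ} (hM : M ≠ 0) (hprod : M.prod ≤ 1) :
    ∃ v ∈ M, v ≤ 1 := by
  by_contra! h
  have := prod_map_lt_prod_map hM (fun _ ↦ 1) id (fun _ _ ↦ one_pos) h
  simp only [map_const', prod_replicate, one_pow, map_id] at this
  linarith

lemma exists_eq_cons_cons_of_prod_eq_one {M : Multiset ℝ} (hM : 2 ≤ card M)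
    (hpos : ∀ x ∈ M, 0 < x) (hprod : M.prod = 1) :
    ∃ u v rest, M = u ::ₘ v ::ₘ rest ∧ 1 ≤ u ∧ v ≤ 1 := by
  obtain ⟨u, huM, hu⟩ := exists_one_le_of_prod_eq_one (card_pos.1 (by omega)) hpos hprod
  have hrest : M.erase u ≠ 0 :=
    card_pos.1 (by rw [card_erase_of_mem huM, Nat.pred_eq_sub_one]; omega)
  have hsplit : u * (M.erase u).prod = 1 := by rw [← prod_cons, cons_erase huM, hprod]
  have hrest_pos : 0 < (M.erase u).prod := prod_pos fun x hx ↦ hpos x (mem_of_mem_erase hx)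
  obtain ⟨v, hvM, hv⟩ := exists_le_one_of_prod_le_one hrest (by nlinarith)
  exact ⟨u, v, (M.erase u).erase v, by rw [cons_erase hvM, cons_erase huM], hu, hv⟩

lemma two_mul_mul_sum_le (B : ℝ) (M : Multiset ℝ) :
    2 * B * M.sum ≤ card M * B ^ 2 + (M.map (· ^ 2)).sum := by
  induction M using Multiset.induction_on with
  | empty => simp
  | cons a M ih =>
    simp only [sum_cons, map_cons, card_cons]
    push_cast
    nlinarith [sq_nonneg (B - a)]

theorem sq_sum_le_of_prod_eq_one (M : Multiset ℝ) (hpos : ∀ x ∈ M, 0 < x)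
    (hprod : M.prod = 1) :
    M.sum ^ 2 ≤ (card M - 1 : ℝ) * (M.map (· ^ 2)).sum + card M := by
  induction hk : card M generalizing M with
  | zero => simp [card_eq_zero.1 hk]
  | succ k ih =>
    rcases Nat.eq_zero_or_pos k with rfl | hk0
    · obtain ⟨a, rfl⟩ := card_eq_one.1 hk
      obtain rfl : a = 1 := by simpa using hprod
      norm_num
    obtain ⟨u, v, rest, rfl, hu, hv⟩ := exists_eq_cons_cons_of_prod_eq_one (by omega) hpos hprod
    have hu0 : 0 < u := hpos u (by simp)
    have hv0 : 0 < v := hpos v (by simp)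
    have hrest : (card rest : ℝ) = k - 1 := by
      simp only [card_cons] at hk
      rw [show card rest = k - 1 by omega, Nat.cast_sub hk0, Nat.cast_one]
    have hmerged := ih ((u * v) ::ₘ rest)
      (fun x hx ↦ (mem_cons.1 hx).elim (· ▸ mul_pos hu0 hv0) (fun h ↦ hpos x (by simp [h])))
      (by simpa [mul_assoc] using hprod) (by simp only [card_cons] at hk ⊢; omega)
    have hB := two_mul_mul_sum_le (u + v - u * v) rest
    have hk1 : (1 : ℝ) ≤ k := by exact_mod_cast hk0
    have hslack : 0 ≤ ((k : ℝ) - 1) * (u * v * (u - 1) * (1 - v)) :=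
      mul_nonneg (by linarith)
        (mul_nonneg (mul_nonneg (by positivity) (sub_nonneg.2 hu)) (sub_nonneg.2 hv))
    simp only [sum_cons, map_cons, hrest] at hmerged hB ⊢
    push_cast
    nlinarith [sq_nonneg (u * v - 1)]

end Multiset

namespace Finset

variable {ι : Type*} {s : Finset ι}

theorem sq_sum_le_of_prod_eq_one {c : ι → ℝ} (hpos : ∀ i ∈ s, 0 < c i)
    (hprod : ∏ i ∈ s, c i = 1) :
    (∑ i ∈ s, c i) ^ 2 ≤ (#s - 1 : ℝ) * ∑ i ∈ s, c i ^ 2 + #s := by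
  simpa [Multiset.map_map] using Multiset.sq_sum_le_of_prod_eq_one (s.val.map c)
    (by simpa using hpos) (by simpa using hprod)

theorem card_le_sum_of_prod_eq_one {z : ι → ℝ} (hpos : ∀ i ∈ s, 0 ≤ z i)
    (hprod : ∏ i ∈ s, z i = 1) : (#s : ℝ) ≤ ∑ i ∈ s, z i := by
  rcases s.eq_empty_or_nonempty with rfl | hs
  · simp
  have hcard : (0 : ℝ) < #s := by exact_mod_cast hs.card_pos
  have := Real.geom_mean_le_arith_mean s (fun _ ↦ 1) z (fun _ _ ↦ zero_le_one) (by simpa) hpos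
  simp only [Real.rpow_one, hprod, sum_const, nsmul_eq_mul, mul_one, one_mul] at this
  rwa [Real.one_rpow, le_div_iff₀ hcard, one_mul] at this

theorem sum_offDiag_mul [DecidableEq ι] (c : ι → ℝ) :
    ∑ p ∈ s.offDiag, c p.1 * c p.2 = (∑ i ∈ s, c i) ^ 2 - ∑ i ∈ s, c i ^ 2 := by
  have h := sum_union (f := fun p : ι × ι ↦ c p.1 * c p.2) (disjoint_diag_offDiag s)
  rw [diag_union_offDiag, sum_product, sum_diag, ← sum_mul_sum] at h
  simp only [← sq] at h
  linarith

theorem prod_offDiag_mul_eq_one [DecidableEq ι] {c : ι → ℝ} (hprod : ∏ i ∈ s, c i = 1) :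
    ∏ p ∈ s.offDiag, c p.1 * c p.2 = 1 := by
  have h := prod_union (f := fun p : ι × ι ↦ c p.1 * c p.2) (disjoint_diag_offDiag s)
  rw [diag_union_offDiag, prod_product, prod_diag] at h
  simpa [prod_mul_distrib, prod_pow, hprod] using h.symm

theorem card_mul_card_sub_one_add_sum_sq_le_of_prod_eq_one [DecidableEq ι] {c : ι → ℝ}
    (hpos : ∀ i ∈ s, 0 < c i) (hprod : ∏ i ∈ s, c i = 1) :
    (#s * (#s - 1) : ℝ) + ∑ i ∈ s, c i ^ 2 ≤ (∑ i ∈ s, c i) ^ 2 := by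
  have h := card_le_sum_of_prod_eq_one (s := s.offDiag)
    (fun p hp ↦ (mul_pos (hpos _ (mem_offDiag.1 hp).1) (hpos _ (mem_offDiag.1 hp).2.1)).le)
    (prod_offDiag_mul_eq_one hprod)
  rw [sum_offDiag_mul, offDiag_card, Nat.cast_sub (Nat.le_mul_self _), Nat.cast_mul] at h
  linarith

lemma exists_prod_div_eq_one {b : ι → ℝ} (hs : s.Nonempty) (hpos : ∀ i ∈ s, 0 < b i) :
    ∃ γ > 0, γ ^ 2 = (∏ i ∈ s, b i) ^ ((2 : ℝ) / #s) ∧ ∏ i ∈ s, b i / γ = 1 := by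
  have hP : 0 < ∏ j ∈ s, b j := prod_pos hpos
  have hcard : (#s : ℝ) ≠ 0 := by exact_mod_cast hs.card_pos.ne'
  refine ⟨(∏ i ∈ s, b i) ^ (#s : ℝ)⁻¹, Real.rpow_pos_of_pos hP _, ?_, ?_⟩
  · rw [← Real.rpow_natCast, ← Real.rpow_mul hP.le, inv_mul_eq_div, Nat.cast_ofNat]
  · rw [prod_div_distrib, prod_const, ← Real.rpow_natCast, ← Real.rpow_mul hP.le,
      inv_mul_cancel₀ hcard, Real.rpow_one, div_self hP.ne']

theorem sq_sum_le_sum_sq_add_rpow {b : ι → ℝ} (hs : s.Nonempty) (hpos : ∀ i ∈ s, 0 < b i) :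
    (∑ i ∈ s, b i) ^ 2 ≤
      (#s - 1 : ℝ) * ∑ i ∈ s, b i ^ 2 + #s * (∏ i ∈ s, b i) ^ ((2 : ℝ) / #s) := by
  obtain ⟨γ, hγ, hγ2, hprod⟩ := exists_prod_div_eq_one hs hpos
  have h := sq_sum_le_of_prod_eq_one (fun i hi ↦ div_pos (hpos i hi) hγ) hprod
  simp only [div_pow, ← sum_div] at h
  rw [← hγ2]
  field_simp at h
  linarith

theorem rpow_add_sum_sq_le_sq_sum [DecidableEq ι] {b : ι → ℝ} (hs : s.Nonempty)
    (hpos : ∀ i ∈ s, 0 < b i) :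
    #s * (#s - 1 : ℝ) * (∏ i ∈ s, b i) ^ ((2 : ℝ) / #s) + ∑ i ∈ s, b i ^ 2 ≤
      (∑ i ∈ s, b i) ^ 2 := by
  obtain ⟨γ, hγ, hγ2, hprod⟩ := exists_prod_div_eq_one hs hpos
  have h := card_mul_card_sub_one_add_sum_sq_le_of_prod_eq_one
    (fun i hi ↦ div_pos (hpos i hi) hγ) hprod
  simp only [div_pow, ← sum_div] at h
  rw [← hγ2]
  field_simp at h
  linarith

end Finset

theorem statement_6 {n : ℕ} (hn : 3 ≤ n) (G : SimpleGraph (Fin n)) [DecidableRel G.Adj]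
    (μ : Fin n → ℝ) (hμ : IsLapEigSeq G μ) (hμ2 : 0 < μ ⟨1, by omega⟩) :
    ((n : ℝ) * ∑ i ∈ univ.filter (fun i : Fin n => 0 < i.val), 1 / μ i) ^ 2 / ((n : ℝ) * ((n : ℝ) - 2)) -
        ((n : ℝ) * ((n : ℝ) - 1) / ((n : ℝ) - 2)) * (1 / (∏ i ∈ univ.filter (fun i : Fin n => 0 < i.val), μ i)) ^ ((2 : ℝ) / ((n : ℝ) - 1)) ≤
      (n : ℝ) * ∑ i ∈ univ.filter (fun i : Fin n => 0 < i.val), 1 / μ i ^ 2 ∧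
    (n : ℝ) * ∑ i ∈ univ.filter (fun i : Fin n => 0 < i.val), 1 / μ i ^ 2 ≤
      ((n : ℝ) * ∑ i ∈ univ.filter (fun i : Fin n => 0 < i.val), 1 / μ i) ^ 2 / (n : ℝ) -
        (n : ℝ) * ((n : ℝ) - 1) * ((n : ℝ) - 2) * (1 / (∏ i ∈ univ.filter (fun i : Fin n => 0 < i.val), μ i)) ^ ((2 : ℝ) / ((n : ℝ) - 1)) := by
  have hn' : (3 : ℝ) ≤ n := by exact_mod_cast hn
  set T := univ.filter (fun i : Fin n => 0 < i.val)
  have hT : (#T : ℝ) = n - 1 := by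
    rw [show T = univ.erase ⟨0, by omega⟩ by ext i; simp [T, Fin.ext_iff, Nat.pos_iff_ne_zero],
      card_erase_of_mem (mem_univ _), card_univ, Fintype.card_fin, Nat.cast_pred (by omega)]
  have hpos : ∀ i ∈ T, 0 < 1 / μ i := fun i hi ↦
    one_div_pos.2 (hμ2.trans_le (hμ.1 (Fin.le_def.2 (mem_filter.1 hi).2)))
  have hTne : T.Nonempty := card_pos.1 (by rw [← Nat.cast_pos (α := ℝ), hT]; linarith)
  have H1 := sq_sum_le_sum_sq_add_rpow hTne hpos
  have H2 := rpow_add_sum_sq_le_sq_sum hTne hpos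
  simp only [one_div_pow, prod_div_distrib, prod_const_one, hT] at H1 H2
  set S := ∑ i ∈ T, 1 / μ i
  set Q := ∑ i ∈ T, 1 / μ i ^ 2
  set g := (1 / ∏ i ∈ T, μ i) ^ ((2 : ℝ) / (n - 1))
  have hn2 : (0 : ℝ) < n - 2 := by linarith
  constructor
  · calc (n * S) ^ 2 / (n * (n - 2)) - n * (n - 1) / (n - 2) * g
        = n / (n - 2) * (S ^ 2 - (n - 1) * g) := by field_simp
      _ ≤ n / (n - 2) * ((n - 2) * Q) :=
        mul_le_mul_of_nonneg_left (by linarith) (div_nonneg (by linarith) hn2.le)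
      _ = n * Q := by field_simp
  · calc n * Q ≤ n * (S ^ 2 - (n - 1) * (n - 2) * g) := by gcongr; linarith
      _ = (n * S) ^ 2 / n - n * (n - 1) * (n - 2) * g := by field_simp
end

section
/- Let S(a,b) be the double star on n vertices with a + b = n − 2, a ≥ 1, b ≥ 1. Then n² + 3n + 4/n − 16 ≤ BH(S(a,b)) ≤ n² − 2n + 4⌈(n−2)/2⌉⌊(n−2)/2⌋ + (⌈(n−2)/2⌉⌊(n−2)/2⌋ + 1)²/n, where the lower bound is attained exactly when {a,b} = {1, n−3} and the upper bound exactly when {a,b} = {⌈(n−2)/2⌉, ⌊(n−2)/2⌋}. -/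
open Finset Polynomial

/-- The double star `S(a,b)`: vertex `0` and vertex `1` are adjacent, vertex `0` has
the `a` pendant neighbours `2, …, a+1`, and vertex `1` has the `b` pendant
neighbours `a+2, …, a+b+1`. -/
def doubleStar (a b : ℕ) : SimpleGraph (Fin (a + b + 2)) :=
  SimpleGraph.fromRel (fun u v =>
    (u.val = 0 ∧ v.val = 1) ∨ (u.val = 0 ∧ 2 ≤ v.val ∧ v.val < a + 2) ∨
      (u.val = 1 ∧ a + 2 ≤ v.val))

noncomputable instance (a b : ℕ) : DecidableRel (doubleStar a b).Adj :=
  Classical.decRel _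

/-!
The Laplacian of `S(a,b)` has the eigenvalue `0` once (the graph is connected) and the eigenvalue
`1` with multiplicity `n - 4` (vectors vanishing at both hubs whose entries sum to zero on each
leaf set). Eliminating the leaves from `L x = t x` shows that the three remaining eigenvalues are
roots of `t³ - (n + 2) t² + (ab + 2n + 1) t - n`, while `tr L` and `tr L²` give their first two
power sums; Vieta then yields `Σ 1/λ²`, i.e. `BH(S(a,b)) = n² - 2n + 4ab + (ab + 1)²/n`. This is
strictly increasing in `ab`, and under `a + b = n - 2`, `a, b ≥ 1`, the product `ab` is smallest
(`n - 3`) exactly when `1 ∈ {a, b}` and largest exactly when `{a, b}` is the balanced split.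
-/

open Matrix Module

namespace Matrix.IsHermitian

variable {n : Type*} [Fintype n] [DecidableEq n] {A : Matrix n n ℝ} (hA : A.IsHermitian)
include hA

lemma eq_eigenvectorUnitary_mul_diagonal_mul_star (t : ℝ) :
    A - t • 1 = (hA.eigenvectorUnitary : Matrix n n ℝ) *
      diagonal (hA.eigenvalues - fun _ => t) * star (hA.eigenvectorUnitary : Matrix n n ℝ) := by
  have hU := (mem_unitaryGroup_iff).mp hA.eigenvectorUnitary.2
  conv_lhs => rw [hA.spectral_theorem, Unitary.conjStarAlgAut_apply]
  rw [Pi.sub_def, ← diagonal_sub, Matrix.mul_sub, Matrix.sub_mul, ← smul_one_eq_diagonal,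
    Matrix.mul_smul, Matrix.mul_one, Matrix.smul_mul, hU]
  rfl

lemma sum_eigenvalues_sq : ∑ i, hA.eigenvalues i ^ 2 = (A * A).trace := by
  have hU := (mem_unitaryGroup_iff').mp hA.eigenvectorUnitary.2
  have hA' := hA.eq_eigenvectorUnitary_mul_diagonal_mul_star 0
  simp only [zero_smul, sub_zero] at hA'
  set U : Matrix n n ℝ := (hA.eigenvectorUnitary : Matrix n n ℝ)
  set D := diagonal (hA.eigenvalues - fun _ => (0 : ℝ))
  conv_rhs => rw [hA']
  rw [show U * D * star U * (U * D * star U) = U * (D * (star U * U) * D) * star U by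
    simp only [Matrix.mul_assoc], hU, Matrix.mul_one, trace_mul_cycle, ← Matrix.mul_assoc, hU,
    Matrix.one_mul, diagonal_mul_diagonal, trace_diagonal]
  simp only [Pi.sub_apply, sub_zero, sq]

lemma card_eigenvalues_eq (t : ℝ) :
    #{i | hA.eigenvalues i = t} = finrank ℝ (LinearMap.ker (A - t • 1).mulVecLin) := by
  have hrank : (A - t • 1).rank = #{i | ¬hA.eigenvalues i = t} := by
    rw [hA.eq_eigenvectorUnitary_mul_diagonal_mul_star t, ← Unitary.coe_star]
    simp [-isUnit_iff_ne_zero, -Unitary.coe_star, rank_diagonal, Fintype.card_subtype, sub_eq_zero]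
  have hnullity := LinearMap.finrank_range_add_finrank_ker (A - t • 1).mulVecLin
  rw [show finrank ℝ (LinearMap.range (A - t • 1).mulVecLin) = (A - t • 1).rank from rfl, hrank,
    finrank_fintype_fun_eq_card] at hnullity
  have hsplit := card_filter_add_card_filter_not (s := univ) (fun i => hA.eigenvalues i = t)
  rw [card_univ] at hsplit
  omega

end Matrix.IsHermitian

namespace SimpleGraph

variable {V : Type*} [Fintype V] [DecidableEq V] (G : SimpleGraph V) [DecidableRel G.Adj]

lemma trace_lapMatrix : (G.lapMatrix ℝ).trace = ∑ v, (G.degree v : ℝ) := by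
  simp [lapMatrix, degMatrix, trace_sub, trace_adjMatrix]

lemma trace_lapMatrix_mul_self_s9 :
    (G.lapMatrix ℝ * G.lapMatrix ℝ).trace = ∑ v, ((G.degree v : ℝ) ^ 2 + G.degree v) := by
  have hDA : (G.degMatrix ℝ * G.adjMatrix ℝ).trace = 0 := by
    simp only [trace, diag_apply, degMatrix, diagonal_mul, adjMatrix_apply, SimpleGraph.irrefl,
      if_false, mul_zero, sum_const_zero]
  rw [lapMatrix, Matrix.sub_mul, Matrix.mul_sub, Matrix.mul_sub, trace_sub, trace_sub, trace_sub,
    trace_mul_comm (G.adjMatrix ℝ), hDA]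
  simp only [trace, diag_apply, adjMatrix_mul_self_apply_self, degMatrix, diagonal_mul_diagonal,
    diagonal_apply_eq, sum_add_distrib, sq]
  ring

lemma lapEigsUnordered_nonneg (v : V) : 0 ≤ lapEigsUnordered G v :=
  (posSemidef_lapMatrix ℝ G).eigenvalues_nonneg v

lemma exists_lapEigsUnordered_eq_zero [Nonempty V] : ∃ v, lapEigsUnordered G v = 0 := by
  have h := (posSemidef_lapMatrix ℝ G).1.det_eq_prod_eigenvalues
  rw [det_lapMatrix_eq_zero] at h
  simpa [lapEigsUnordered, eq_comm (a := (0 : ℝ)), prod_eq_zero_iff] using h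

lemma sum_lapEigsUnordered : ∑ v, lapEigsUnordered G v = ∑ v, (G.degree v : ℝ) := by
  rw [← trace_lapMatrix, (posSemidef_lapMatrix ℝ G).1.trace_eq_sum_eigenvalues]
  rfl

lemma sum_lapEigsUnordered_sq :
    ∑ v, lapEigsUnordered G v ^ 2 = ∑ v, ((G.degree v : ℝ) ^ 2 + G.degree v) := by
  rw [← trace_lapMatrix_mul_self_s9]
  exact (posSemidef_lapMatrix ℝ G).1.sum_eigenvalues_sq

lemma exists_mulVec_eq_lapEigsUnordered_smul (v : V) :
    ∃ x : V → ℝ, x ≠ 0 ∧ G.lapMatrix ℝ *ᵥ x = lapEigsUnordered G v • x :=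
  let hA := (posSemidef_lapMatrix ℝ G).1
  ⟨_, (WithLp.ofLp_eq_zero 2).ne.2 (hA.eigenvectorBasis.orthonormal.ne_zero v),
    hA.mulVec_eigenvectorBasis v⟩

lemma card_lapEigsUnordered_eq_zero :
    #{v | lapEigsUnordered G v = 0} = Fintype.card G.ConnectedComponent := by
  rw [card_connectedComponent_eq_finrank_ker_toLin'_lapMatrix]
  have h := (posSemidef_lapMatrix ℝ G).1.card_eigenvalues_eq 0
  rw [zero_smul, sub_zero] at h
  exact h

lemma Connected.card_lapEigsUnordered_eq_zero (hG : G.Connected) :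
    #{v | lapEigsUnordered G v = 0} = 1 := by
  rw [SimpleGraph.card_lapEigsUnordered_eq_zero]
  have := hG.preconnected.subsingleton_connectedComponent
  obtain ⟨v⟩ := hG.nonempty
  exact Fintype.card_eq_one_iff.mpr ⟨G.connectedComponentMk v, fun _ => Subsingleton.elim _ _⟩

end SimpleGraph

-- `1 / 0 = 0`, so the sum may as well run over all eigenvalues, including `λ₁ = 0`.
lemma IsLapEigSeq.sum_filter_pos_one_div_sq {V : Type*} [Fintype V] [DecidableEq V] [Nonempty V]
    {G : SimpleGraph V} [DecidableRel G.Adj] {n : ℕ} {μ : Fin n → ℝ} (hμ : IsLapEigSeq G μ) :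
    ∑ i ∈ univ.filter (fun i : Fin n => 0 < i.val), 1 / μ i ^ 2 =
      ∑ v, 1 / lapEigsUnordered G v ^ 2 := by
  obtain ⟨hmono, e, he⟩ := hμ
  obtain ⟨v₀, hv₀⟩ := G.exists_lapEigsUnordered_eq_zero
  have hn : 0 < n := Fin.pos (e v₀)
  have hμ₀ : μ ⟨0, hn⟩ = 0 := by
    apply le_antisymm
    · rw [← hv₀, he]
      exact hmono (Nat.zero_le _)
    · rw [← e.apply_symm_apply ⟨0, hn⟩, ← he]
      exact G.lapEigsUnordered_nonneg _
  have hpos : univ.filter (fun i : Fin n => 0 < i.val) = univ.erase ⟨0, hn⟩ := by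
    ext i
    simp [Fin.ext_iff, Nat.pos_iff_ne_zero]
  rw [hpos, sum_erase _ (by simp [hμ₀]), ← e.sum_comp]
  simp only [he]

lemma sum_one_div_sq_of_three_roots {x y z e₁ e₂ e₃ : ℝ} (hx : x ≠ 0) (hy : y ≠ 0) (hz : z ≠ 0)
    (hs₁ : x + y + z = e₁) (hs₂ : x ^ 2 + y ^ 2 + z ^ 2 = e₁ ^ 2 - 2 * e₂)
    (hrx : x ^ 3 - e₁ * x ^ 2 + e₂ * x - e₃ = 0) (hry : y ^ 3 - e₁ * y ^ 2 + e₂ * y - e₃ = 0)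
    (hrz : z ^ 3 - e₁ * z ^ 2 + e₂ * z - e₃ = 0) :
    1 / x ^ 2 + 1 / y ^ 2 + 1 / z ^ 2 = (e₂ ^ 2 - 2 * e₁ * e₃) / e₃ ^ 2 := by
  have he₂ : x * y + y * z + z * x = e₂ := by
    linear_combination (x + y + z + e₁) / 2 * hs₁ - hs₂ / 2
  -- Newton's identity for `x³ + y³ + z³`, compared with the sum of the three cubic equations
  have he₃ : x * y * z = e₃ := by
    linear_combination (hrx + hry + hrz) / 3 - (x ^ 2 + y ^ 2 + z ^ 2) / 3 * hs₁ +
      (x + y + z) / 3 * he₂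
  rw [← hs₁, ← he₂, ← he₃]
  field_simp
  ring

lemma sum_one_div_sq_of_roots_cubic {ι : Type*} [Fintype ι] {f : ι → ℝ} {k : ℕ} {e₁ e₂ e₃ : ℝ}
    (hcard : Fintype.card ι = k + 4) (h₀ : #{i | f i = 0} = 1) (h₁ : #{i | f i = 1} = k)
    (hs₁ : ∑ i, f i = k + e₁) (hs₂ : ∑ i, f i ^ 2 = k + (e₁ ^ 2 - 2 * e₂))
    (hroot : ∀ i, f i ≠ 0 → f i ≠ 1 → f i ^ 3 - e₁ * f i ^ 2 + e₂ * f i - e₃ = 0) :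
    ∑ i, 1 / f i ^ 2 = k + (e₂ ^ 2 - 2 * e₁ * e₃) / e₃ ^ 2 := by
  classical
  set T := univ.filter fun i => f i ≠ 0 ∧ f i ≠ 1
  have hsplit (g : ℝ → ℝ) : ∑ i, g (f i) = g 0 + k * g 1 + ∑ i ∈ T, g (f i) := by
    rw [← sum_filter_add_sum_filter_not univ (fun i => f i = 0),
      ← sum_filter_add_sum_filter_not (univ.filter fun i => ¬f i = 0) (fun i => f i = 1),
      filter_filter, filter_filter]
    have hT : univ.filter (fun i => ¬f i = 0 ∧ ¬f i = 1) = T := rfl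
    have h₁' : univ.filter (fun i => ¬f i = 0 ∧ f i = 1) = univ.filter (fun i => f i = 1) :=
      filter_congr fun i _ => and_iff_right_of_imp fun h => h ▸ one_ne_zero
    have e₀ : ∑ i ∈ univ.filter (fun i => f i = 0), g (f i) = g 0 := by
      rw [sum_congr rfl fun i hi => congrArg g (mem_filter.1 hi).2, sum_const, h₀, one_smul]
    have e₁ : ∑ i ∈ univ.filter (fun i => f i = 1), g (f i) = k * g 1 := by
      rw [sum_congr rfl fun i hi => congrArg g (mem_filter.1 hi).2, sum_const, h₁, nsmul_eq_mul]
    rw [hT, h₁', e₀, e₁, add_assoc]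
  have hT : #T = 3 := by
    have h := hsplit fun _ => 1
    simp only [sum_const, card_univ, hcard, nsmul_eq_mul, mul_one] at h
    push_cast at h
    exact_mod_cast (by linarith : (#T : ℝ) = 3)
  obtain ⟨i, j, l, hij, hil, hjl, hTeq⟩ := card_eq_three.mp hT
  have hsumT (h : ι → ℝ) : ∑ m ∈ {i, j, l}, h m = h i + h j + h l := by
    rw [sum_insert (by simp [hij, hil]), sum_insert (by simp [hjl]), sum_singleton, add_assoc]
  have hmem : ∀ m ∈ ({i, j, l} : Finset ι), f m ≠ 0 ∧ f m ≠ 1 := fun m hm =>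
    (mem_filter.mp (hTeq ▸ hm : m ∈ T)).2
  obtain ⟨hi₀, hi₁⟩ := hmem i (by simp)
  obtain ⟨hj₀, hj₁⟩ := hmem j (by simp)
  obtain ⟨hl₀, hl₁⟩ := hmem l (by simp)
  have hs₁' := hsplit id
  have hs₂' := hsplit fun t => t ^ 2
  have hinv := hsplit fun t => 1 / t ^ 2
  simp only [id, hTeq] at hs₁' hs₂' hinv
  rw [hsumT] at hs₁' hs₂' hinv
  rw [hinv, sum_one_div_sq_of_three_roots hi₀ hj₀ hl₀ (by linarith) (by linarith)
    (hroot i hi₀ hi₁) (hroot j hj₀ hj₁) (hroot l hl₀ hl₁)]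
  ring

namespace doubleStar

variable (a b : ℕ)

def hub₀ : Fin (a + b + 2) := ⟨0, by omega⟩

def hub₁ : Fin (a + b + 2) := ⟨1, by omega⟩

def leaves₀ : Finset (Fin (a + b + 2)) := univ.filter fun w => 2 ≤ w.val ∧ w.val < a + 2

def leaves₁ : Finset (Fin (a + b + 2)) := univ.filter fun w => a + 2 ≤ w.val

lemma adj_iff (u v : Fin (a + b + 2)) : (doubleStar a b).Adj u v ↔
    (u.val = 0 ∧ v.val = 1) ∨ (v.val = 0 ∧ u.val = 1) ∨
    (u.val = 0 ∧ 2 ≤ v.val ∧ v.val < a + 2) ∨ (v.val = 0 ∧ 2 ≤ u.val ∧ u.val < a + 2) ∨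
    (u.val = 1 ∧ a + 2 ≤ v.val) ∨ (v.val = 1 ∧ a + 2 ≤ u.val) := by
  rw [doubleStar, SimpleGraph.fromRel_adj, ne_eq, Fin.ext_iff]
  omega

lemma card_leaves₀ : #(leaves₀ a b) = a := by
  rw [leaves₀, card_filter, Fin.sum_univ_eq_sum_range (fun i => if 2 ≤ i ∧ i < a + 2 then 1 else 0),
    ← card_filter, show (range (a + b + 2)).filter (fun i => 2 ≤ i ∧ i < a + 2) = Ico 2 (a + 2) by
      ext i; simp only [mem_filter, mem_range, mem_Ico]; omega, Nat.card_Ico]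
  omega

lemma card_leaves₁ : #(leaves₁ a b) = b := by
  rw [leaves₁, card_filter, Fin.sum_univ_eq_sum_range (fun i => if a + 2 ≤ i then 1 else 0),
    ← card_filter, show (range (a + b + 2)).filter (fun i => a + 2 ≤ i) = Ico (a + 2) (a + b + 2) by
      ext i; simp only [mem_filter, mem_range, mem_Ico]; omega, Nat.card_Ico]
  omega

variable {a b} in
lemma leaves₀_nonempty (ha : 1 ≤ a) : (leaves₀ a b).Nonempty :=
  card_pos.mp (by rw [card_leaves₀]; omega)

variable {a b} in
lemma leaves₁_nonempty (hb : 1 ≤ b) : (leaves₁ a b).Nonempty :=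
  card_pos.mp (by rw [card_leaves₁]; omega)

lemma hub₀_notMem_leaves₀ : hub₀ a b ∉ leaves₀ a b := by
  simp [leaves₀, hub₀]

lemma hub₁_notMem_leaves₀ : hub₁ a b ∉ leaves₀ a b := by
  simp [leaves₀, hub₁]

lemma hub₀_notMem_leaves₁ : hub₀ a b ∉ leaves₁ a b := by
  simp [leaves₁, hub₀]

lemma hub₁_notMem_leaves₁ : hub₁ a b ∉ leaves₁ a b := by
  simp [leaves₁, hub₁]

lemma hub₀_ne_hub₁ : hub₀ a b ≠ hub₁ a b := by
  simp [hub₀, hub₁]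

lemma disjoint_leaves : Disjoint (leaves₀ a b) (leaves₁ a b) := by
  rw [disjoint_left]
  intro u hu₀ hu₁
  simp only [leaves₀, leaves₁, mem_filter] at hu₀ hu₁
  omega

lemma neighborFinset_hub₀ :
    (doubleStar a b).neighborFinset (hub₀ a b) = insert (hub₁ a b) (leaves₀ a b) := by
  ext w
  rw [SimpleGraph.mem_neighborFinset]
  simp only [adj_iff, mem_insert, leaves₀, mem_filter, mem_univ, true_and, Fin.ext_iff, hub₀, hub₁]
  omega

lemma neighborFinset_hub₁ :
    (doubleStar a b).neighborFinset (hub₁ a b) = insert (hub₀ a b) (leaves₁ a b) := by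
  ext w
  rw [SimpleGraph.mem_neighborFinset]
  simp only [adj_iff, mem_insert, leaves₁, mem_filter, mem_univ, true_and, and_true, Fin.ext_iff,
    hub₀, hub₁]
  omega

variable {a b} in
lemma neighborFinset_of_mem_leaves₀ {u : Fin (a + b + 2)} (hu : u ∈ leaves₀ a b) :
    (doubleStar a b).neighborFinset u = {hub₀ a b} := by
  rw [leaves₀, mem_filter] at hu
  ext w
  simp only [SimpleGraph.mem_neighborFinset, adj_iff, mem_singleton, Fin.ext_iff, hub₀]
  omega

variable {a b} in
lemma neighborFinset_of_mem_leaves₁ {u : Fin (a + b + 2)} (hu : u ∈ leaves₁ a b) :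
    (doubleStar a b).neighborFinset u = {hub₁ a b} := by
  rw [leaves₁, mem_filter] at hu
  ext w
  simp only [SimpleGraph.mem_neighborFinset, adj_iff, mem_singleton, Fin.ext_iff, hub₁]
  omega

lemma degree_hub₀ : (doubleStar a b).degree (hub₀ a b) = a + 1 := by
  rw [← SimpleGraph.card_neighborFinset_eq_degree, neighborFinset_hub₀,
    card_insert_of_notMem (hub₁_notMem_leaves₀ a b), card_leaves₀]

lemma degree_hub₁ : (doubleStar a b).degree (hub₁ a b) = b + 1 := by
  rw [← SimpleGraph.card_neighborFinset_eq_degree, neighborFinset_hub₁,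
    card_insert_of_notMem (hub₀_notMem_leaves₁ a b), card_leaves₁]

lemma sum_univ (f : Fin (a + b + 2) → ℝ) :
    ∑ u, f u = f (hub₀ a b) + f (hub₁ a b) + ∑ u ∈ leaves₀ a b, f u + ∑ u ∈ leaves₁ a b, f u := by
  have huniv : (univ : Finset (Fin (a + b + 2))) =
      insert (hub₀ a b) (insert (hub₁ a b) (leaves₀ a b ∪ leaves₁ a b)) := by
    ext u
    simp only [mem_univ, true_iff, mem_insert, mem_union, leaves₀, leaves₁, mem_filter, true_and,
      Fin.ext_iff, hub₀, hub₁]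
    omega
  rw [huniv, sum_insert (by simp [hub₀_ne_hub₁, hub₀_notMem_leaves₀, hub₀_notMem_leaves₁]),
    sum_insert (by simp [hub₁_notMem_leaves₀, hub₁_notMem_leaves₁]),
    sum_union (disjoint_leaves a b)]
  ring

lemma sum_degree (g : ℕ → ℝ) :
    ∑ u, g ((doubleStar a b).degree u) = g (a + 1) + g (b + 1) + (a + b) * g 1 := by
  have h₀ : ∑ u ∈ leaves₀ a b, g ((doubleStar a b).degree u) = a * g 1 := by
    rw [sum_congr rfl (g := fun _ => g 1) fun u hu => by
      rw [← SimpleGraph.card_neighborFinset_eq_degree, neighborFinset_of_mem_leaves₀ hu,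
        card_singleton], sum_const, card_leaves₀, nsmul_eq_mul]
  have h₁ : ∑ u ∈ leaves₁ a b, g ((doubleStar a b).degree u) = b * g 1 := by
    rw [sum_congr rfl (g := fun _ => g 1) fun u hu => by
      rw [← SimpleGraph.card_neighborFinset_eq_degree, neighborFinset_of_mem_leaves₁ hu,
        card_singleton], sum_const, card_leaves₁, nsmul_eq_mul]
  rw [sum_univ, degree_hub₀, degree_hub₁, h₀, h₁]
  ring

lemma connected : (doubleStar a b).Connected := by
  have h₀ : ∀ u, (doubleStar a b).Reachable (hub₀ a b) u := by
    have h₀₁ : (doubleStar a b).Adj (hub₀ a b) (hub₁ a b) := by simp [adj_iff, hub₀, hub₁]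
    intro u
    obtain ⟨u, hu⟩ := u
    rcases (by omega : u = 0 ∨ u = 1 ∨ (2 ≤ u ∧ u < a + 2) ∨ a + 2 ≤ u) with rfl | rfl | h | h
    · rfl
    · exact h₀₁.reachable
    · exact SimpleGraph.Adj.reachable (by simp [adj_iff, hub₀]; omega)
    · exact h₀₁.reachable.trans (SimpleGraph.Adj.reachable (by simp [adj_iff, hub₁]; omega))
  exact ⟨fun u v => (h₀ u).symm.trans (h₀ v)⟩

lemma cases_vertex (u : Fin (a + b + 2)) :
    u = hub₀ a b ∨ u = hub₁ a b ∨ u ∈ leaves₀ a b ∨ u ∈ leaves₁ a b := by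
  simp only [Fin.ext_iff, leaves₀, leaves₁, hub₀, hub₁, mem_filter, mem_univ, true_and]
  omega

lemma lapMatrix_mulVec_hub₀ (x : Fin (a + b + 2) → ℝ) :
    ((doubleStar a b).lapMatrix ℝ *ᵥ x) (hub₀ a b) =
      (a + 1) * x (hub₀ a b) - x (hub₁ a b) - ∑ w ∈ leaves₀ a b, x w := by
  rw [SimpleGraph.lapMatrix_mulVec_apply, degree_hub₀, neighborFinset_hub₀,
    sum_insert (hub₁_notMem_leaves₀ a b)]
  push_cast
  ring

lemma lapMatrix_mulVec_hub₁ (x : Fin (a + b + 2) → ℝ) :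
    ((doubleStar a b).lapMatrix ℝ *ᵥ x) (hub₁ a b) =
      (b + 1) * x (hub₁ a b) - x (hub₀ a b) - ∑ w ∈ leaves₁ a b, x w := by
  rw [SimpleGraph.lapMatrix_mulVec_apply, degree_hub₁, neighborFinset_hub₁,
    sum_insert (hub₀_notMem_leaves₁ a b)]
  push_cast
  ring

variable {a b}

lemma lapMatrix_mulVec_of_mem_leaves₀ (x : Fin (a + b + 2) → ℝ) {u : Fin (a + b + 2)}
    (hu : u ∈ leaves₀ a b) : ((doubleStar a b).lapMatrix ℝ *ᵥ x) u = x u - x (hub₀ a b) := by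
  rw [SimpleGraph.lapMatrix_mulVec_apply, ← SimpleGraph.card_neighborFinset_eq_degree,
    neighborFinset_of_mem_leaves₀ hu, card_singleton, sum_singleton]
  push_cast
  ring

lemma lapMatrix_mulVec_of_mem_leaves₁ (x : Fin (a + b + 2) → ℝ) {u : Fin (a + b + 2)}
    (hu : u ∈ leaves₁ a b) : ((doubleStar a b).lapMatrix ℝ *ᵥ x) u = x u - x (hub₁ a b) := by
  rw [SimpleGraph.lapMatrix_mulVec_apply, ← SimpleGraph.card_neighborFinset_eq_degree,
    neighborFinset_of_mem_leaves₁ hu, card_singleton, sum_singleton]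
  push_cast
  ring

lemma lapMatrix_mulVec_eq_smul_iff (x : Fin (a + b + 2) → ℝ) (t : ℝ) :
    (doubleStar a b).lapMatrix ℝ *ᵥ x = t • x ↔
      (∀ u ∈ leaves₀ a b, (1 - t) * x u = x (hub₀ a b)) ∧
      (∀ u ∈ leaves₁ a b, (1 - t) * x u = x (hub₁ a b)) ∧
      (a + 1 - t) * x (hub₀ a b) = x (hub₁ a b) + ∑ w ∈ leaves₀ a b, x w ∧
      (b + 1 - t) * x (hub₁ a b) = x (hub₀ a b) + ∑ w ∈ leaves₁ a b, x w := by
  simp only [funext_iff, Pi.smul_apply, smul_eq_mul]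
  constructor
  · intro hx
    refine ⟨fun u hu => ?_, fun u hu => ?_, ?_, ?_⟩
    · linarith [hx u, lapMatrix_mulVec_of_mem_leaves₀ x hu]
    · linarith [hx u, lapMatrix_mulVec_of_mem_leaves₁ x hu]
    · linarith [hx (hub₀ a b), lapMatrix_mulVec_hub₀ a b x]
    · linarith [hx (hub₁ a b), lapMatrix_mulVec_hub₁ a b x]
  · rintro ⟨h₀, h₁, e₀, e₁⟩ u
    rcases cases_vertex a b u with rfl | rfl | hu | hu
    · linarith [lapMatrix_mulVec_hub₀ a b x]
    · linarith [lapMatrix_mulVec_hub₁ a b x]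
    · linarith [h₀ u hu, lapMatrix_mulVec_of_mem_leaves₀ x hu]
    · linarith [h₁ u hu, lapMatrix_mulVec_of_mem_leaves₁ x hu]

variable (a b) in
noncomputable def hubsAndLeafSums : (Fin (a + b + 2) → ℝ) →ₗ[ℝ] (Fin 4 → ℝ) :=
  LinearMap.pi ![LinearMap.proj (hub₀ a b), LinearMap.proj (hub₁ a b),
    ∑ w ∈ leaves₀ a b, LinearMap.proj w, ∑ w ∈ leaves₁ a b, LinearMap.proj w]

lemma hubsAndLeafSums_apply (x : Fin (a + b + 2) → ℝ) :
    hubsAndLeafSums a b x =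
      ![x (hub₀ a b), x (hub₁ a b), ∑ w ∈ leaves₀ a b, x w, ∑ w ∈ leaves₁ a b, x w] := by
  funext j
  fin_cases j <;> simp [hubsAndLeafSums]

lemma hubsAndLeafSums_surjective (ha : 1 ≤ a) (hb : 1 ≤ b) :
    Function.Surjective (hubsAndLeafSums a b) := by
  obtain ⟨u₀, hu₀⟩ := leaves₀_nonempty (b := b) ha
  obtain ⟨u₁, hu₁⟩ := leaves₁_nonempty (a := a) hb
  have hu₀' : u₀ ∉ leaves₁ a b := disjoint_left.mp (disjoint_leaves a b) hu₀
  have hu₁' : u₁ ∉ leaves₀ a b := disjoint_right.mp (disjoint_leaves a b) hu₁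
  intro y
  refine ⟨Pi.single (hub₀ a b) (y 0) + Pi.single (hub₁ a b) (y 1) + Pi.single u₀ (y 2) +
    Pi.single u₁ (y 3), ?_⟩
  rw [hubsAndLeafSums_apply]
  funext j
  fin_cases j <;>
    simp [sum_add_distrib, sum_pi_single', hu₀, hu₁, hu₀', hu₁', hub₀_ne_hub₁,
      (hub₀_ne_hub₁ a b).symm, hub₀_notMem_leaves₀, hub₁_notMem_leaves₀, hub₀_notMem_leaves₁,
      hub₁_notMem_leaves₁, ne_of_mem_of_not_mem hu₀ (hub₀_notMem_leaves₀ a b),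
      ne_of_mem_of_not_mem hu₀ (hub₁_notMem_leaves₀ a b),
      ne_of_mem_of_not_mem hu₁ (hub₀_notMem_leaves₁ a b),
      ne_of_mem_of_not_mem hu₁ (hub₁_notMem_leaves₁ a b)]

lemma ker_lapMatrix_sub_one (ha : 1 ≤ a) (hb : 1 ≤ b) :
    LinearMap.ker ((doubleStar a b).lapMatrix ℝ - (1 : ℝ) • 1).mulVecLin =
      LinearMap.ker (hubsAndLeafSums a b) := by
  obtain ⟨u₀, hu₀⟩ := leaves₀_nonempty (b := b) ha
  obtain ⟨u₁, hu₁⟩ := leaves₁_nonempty (a := a) hb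
  ext x
  rw [LinearMap.mem_ker, LinearMap.mem_ker, mulVecLin_apply, sub_mulVec, sub_eq_zero, smul_mulVec,
    one_mulVec, lapMatrix_mulVec_eq_smul_iff, hubsAndLeafSums_apply]
  simp only [sub_self, zero_mul, add_sub_cancel_right, cons_eq_zero_iff, zero_empty, and_true]
  constructor
  · rintro ⟨h₀, h₁, e₀, e₁⟩
    have hx₀ := (h₀ u₀ hu₀).symm
    have hx₁ := (h₁ u₁ hu₁).symm
    rw [hx₀, hx₁] at e₀ e₁
    exact ⟨hx₀, hx₁, by linarith, by linarith⟩
  · rintro ⟨hx₀, hx₁, hs₀, hs₁⟩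
    simp_all

lemma finrank_ker_lapMatrix_sub_one (ha : 1 ≤ a) (hb : 1 ≤ b) :
    finrank ℝ (LinearMap.ker ((doubleStar a b).lapMatrix ℝ - (1 : ℝ) • 1).mulVecLin) =
      a + b - 2 := by
  have h := LinearMap.finrank_range_add_finrank_ker (hubsAndLeafSums a b)
  rw [LinearMap.range_eq_top.mpr (hubsAndLeafSums_surjective ha hb), finrank_top,
    finrank_fintype_fun_eq_card, finrank_fintype_fun_eq_card, Fintype.card_fin,
    Fintype.card_fin] at h
  rw [ker_lapMatrix_sub_one ha hb]
  omega

lemma cubic_eq_zero_of_mulVec_eq_smul {x : Fin (a + b + 2) → ℝ} {t : ℝ}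
    (hx : (doubleStar a b).lapMatrix ℝ *ᵥ x = t • x) (hx0 : x ≠ 0) (ht₀ : t ≠ 0) (ht₁ : t ≠ 1) :
    t ^ 3 - (a + b + 4) * t ^ 2 + (a * b + 2 * a + 2 * b + 5) * t - (a + b + 2) = 0 := by
  obtain ⟨h₀, h₁, e₀, e₁⟩ := (lapMatrix_mulVec_eq_smul_iff x t).mp hx
  have ht : 1 - t ≠ 0 := sub_ne_zero.mpr (Ne.symm ht₁)
  have hs₀ : (1 - t) * ∑ w ∈ leaves₀ a b, x w = a * x (hub₀ a b) := by
    rw [mul_sum, sum_congr rfl h₀, sum_const, card_leaves₀, nsmul_eq_mul]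
  have hs₁ : (1 - t) * ∑ w ∈ leaves₁ a b, x w = b * x (hub₁ a b) := by
    rw [mul_sum, sum_congr rfl h₁, sum_const, card_leaves₁, nsmul_eq_mul]
  have q₀ : (t ^ 2 - (a + 2) * t + 1) * x (hub₀ a b) = (1 - t) * x (hub₁ a b) := by
    linear_combination (1 - t) * e₀ + hs₀
  have q₁ : (t ^ 2 - (b + 2) * t + 1) * x (hub₁ a b) = (1 - t) * x (hub₀ a b) := by
    linear_combination (1 - t) * e₁ + hs₁
  have hx₀ : x (hub₀ a b) ≠ 0 := by
    intro hx₀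
    have hx₁ : x (hub₁ a b) = 0 := by
      rw [hx₀, mul_zero] at q₀
      exact (mul_eq_zero.mp q₀.symm).resolve_left ht
    apply hx0
    funext u
    rcases cases_vertex a b u with rfl | rfl | hu | hu
    · exact hx₀
    · exact hx₁
    · exact (mul_eq_zero.mp ((h₀ u hu).trans hx₀)).resolve_left ht
    · exact (mul_eq_zero.mp ((h₁ u hu).trans hx₁)).resolve_left ht
  have hdet : (t ^ 2 - (a + 2) * t + 1) * (t ^ 2 - (b + 2) * t + 1) = (1 - t) ^ 2 := by
    apply mul_right_cancel₀ hx₀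
    linear_combination (t ^ 2 - (b + 2) * t + 1) * q₀ + (1 - t) * q₁
  have hcubic :
      t * (t ^ 3 - (a + b + 4) * t ^ 2 + (a * b + 2 * a + 2 * b + 5) * t - (a + b + 2)) = 0 := by
    linear_combination hdet
  exact (mul_eq_zero.mp hcubic).resolve_left ht₀

theorem biharmonic_eq (ha : 1 ≤ a) (hb : 1 ≤ b) :
    ((a + b + 2 : ℕ) : ℝ) * ∑ v, 1 / lapEigsUnordered (doubleStar a b) v ^ 2 =
      ((a + b + 2 : ℕ) : ℝ) ^ 2 - 2 * ((a + b + 2 : ℕ) : ℝ) + 4 * (a * b) +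
        (a * b + 1) ^ 2 / ((a + b + 2 : ℕ) : ℝ) := by
  have hA := (SimpleGraph.posSemidef_lapMatrix ℝ (doubleStar a b)).1
  have hk : ((a + b - 2 : ℕ) : ℝ) = a + b - 2 := by
    rw [Nat.cast_sub (by omega)]
    push_cast
    ring
  have hsum := sum_one_div_sq_of_roots_cubic (k := a + b - 2) (e₁ := a + b + 4)
    (e₂ := a * b + 2 * a + 2 * b + 5) (e₃ := a + b + 2)
    (by rw [Fintype.card_fin]; omega) (connected a b).card_lapEigsUnordered_eq_zero
    (by rw [← finrank_ker_lapMatrix_sub_one ha hb]; exact hA.card_eigenvalues_eq 1)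
    (by rw [SimpleGraph.sum_lapEigsUnordered, sum_degree, hk]; push_cast; ring)
    (by rw [SimpleGraph.sum_lapEigsUnordered_sq, sum_degree (g := fun d => (d : ℝ) ^ 2 + d), hk]
        push_cast; ring)
    fun v hv₀ hv₁ => by
      obtain ⟨x, hx0, hx⟩ := (doubleStar a b).exists_mulVec_eq_lapEigsUnordered_smul v
      exact cubic_eq_zero_of_mulVec_eq_smul hx hx0 hv₀ hv₁
  rw [hsum, hk]
  push_cast
  field_simp
  ring

end doubleStar

lemma Nat.mul_eq_add_sub_one_iff {a b : ℕ} (ha : 1 ≤ a) (hb : 1 ≤ b) :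
    a * b = a + b - 1 ↔ a = 1 ∨ b = 1 := by
  have h : a * b = (a - 1) * (b - 1) + (a + b - 1) := by
    obtain ⟨a, rfl⟩ := Nat.exists_eq_add_of_le' ha
    obtain ⟨b, rfl⟩ := Nat.exists_eq_add_of_le' hb
    simp only [Nat.add_sub_cancel]
    ring_nf
    omega
  rw [h, Nat.add_eq_right, Nat.mul_eq_zero]
  omega

-- With `M = ⌈(a + b)/2⌉` and `m = ⌊(a + b)/2⌋`, no integer lies strictly between `m` and `M`,
-- so the right-hand side is never negative.
lemma Nat.half_mul_half_sub_mul (a b : ℕ) :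
    (((a + b + 1) / 2 * ((a + b) / 2) : ℕ) : ℤ) - a * b =
      (((a + b + 1) / 2 : ℕ) - a) * (((a + b) / 2 : ℕ) - a) := by
  have h : (((a + b + 1) / 2 : ℕ) : ℤ) + ((a + b) / 2 : ℕ) = a + b := by omega
  rw [Nat.cast_mul]
  linear_combination (a : ℤ) * h

lemma Nat.mul_le_half_mul_half (a b : ℕ) : a * b ≤ (a + b + 1) / 2 * ((a + b) / 2) := by
  have h := Nat.half_mul_half_sub_mul a b
  rcases (by omega : a ≤ (a + b) / 2 ∨ (a + b + 1) / 2 ≤ a) with h' | h'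
  · have : (0 : ℤ) ≤ (((a + b + 1) / 2 : ℕ) - a) * (((a + b) / 2 : ℕ) - a) :=
      mul_nonneg (by omega) (by omega)
    omega
  · have : (0 : ℤ) ≤ (((a + b + 1) / 2 : ℕ) - a) * (((a + b) / 2 : ℕ) - a) :=
      mul_nonneg_of_nonpos_of_nonpos (by omega) (by omega)
    omega

lemma Nat.mul_eq_half_mul_half_iff (a b : ℕ) :
    a * b = (a + b + 1) / 2 * ((a + b) / 2) ↔
      (a = (a + b + 1) / 2 ∧ b = (a + b) / 2) ∨ (a = (a + b) / 2 ∧ b = (a + b + 1) / 2) := by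
  rw [← Nat.cast_inj (R := ℤ), Nat.cast_mul a b, eq_comm, ← sub_eq_zero, Nat.half_mul_half_sub_mul,
    _root_.mul_eq_zero, sub_eq_zero, sub_eq_zero]
  omega

lemma strictMono_biharmonic_of_mul {n : ℝ} (hn : 0 < n) :
    StrictMono fun p : ℕ => n ^ 2 - 2 * n + 4 * p + ((p : ℝ) + 1) ^ 2 / n := by
  intro p q hpq
  have : (p : ℝ) < q := by exact_mod_cast hpq
  dsimp only
  gcongr

theorem statement_9 {a b n : ℕ} (ha : 1 ≤ a) (hb : 1 ≤ b) (hn : n = a + b + 2)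
    (μ : Fin (a + b + 2) → ℝ) (hμ : IsLapEigSeq (doubleStar a b) μ) :
    ((n : ℝ) ^ 2 + 3 * (n : ℝ) + 4 / (n : ℝ) - 16 ≤ (n : ℝ) * ∑ i ∈ univ.filter (fun i : Fin (a + b + 2) => 0 < i.val), 1 / μ i ^ 2) ∧
    ((n : ℝ) * ∑ i ∈ univ.filter (fun i : Fin (a + b + 2) => 0 < i.val), 1 / μ i ^ 2 ≤ (n : ℝ) ^ 2 - 2 * (n : ℝ) + 4 * ((((n - 1) / 2 : ℕ) : ℝ) * (((n - 2) / 2 : ℕ) : ℝ)) + ((((n - 1) / 2 : ℕ) : ℝ) * (((n - 2) / 2 : ℕ) : ℝ) + 1) ^ 2 / (n : ℝ)) ∧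
    ((n : ℝ) * ∑ i ∈ univ.filter (fun i : Fin (a + b + 2) => 0 < i.val), 1 / μ i ^ 2 = (n : ℝ) ^ 2 + 3 * (n : ℝ) + 4 / (n : ℝ) - 16 ↔ (a = 1 ∧ b = n - 3) ∨ (a = n - 3 ∧ b = 1)) ∧
    ((n : ℝ) * ∑ i ∈ univ.filter (fun i : Fin (a + b + 2) => 0 < i.val), 1 / μ i ^ 2 = (n : ℝ) ^ 2 - 2 * (n : ℝ) + 4 * ((((n - 1) / 2 : ℕ) : ℝ) * (((n - 2) / 2 : ℕ) : ℝ)) + ((((n - 1) / 2 : ℕ) : ℝ) * (((n - 2) / 2 : ℕ) : ℝ) + 1) ^ 2 / (n : ℝ) ↔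
      (a = (n - 1) / 2 ∧ b = (n - 2) / 2) ∨ (a = (n - 2) / 2 ∧ b = (n - 1) / 2)) := by
  have hn₀ : (0 : ℝ) < n := by rw [hn]; positivity
  set f := fun p : ℕ => (n : ℝ) ^ 2 - 2 * n + 4 * p + ((p : ℝ) + 1) ^ 2 / n
  have hf := strictMono_biharmonic_of_mul hn₀
  have hBH : (n : ℝ) * ∑ i ∈ univ.filter (fun i : Fin (a + b + 2) => 0 < i.val), 1 / μ i ^ 2 =
      f (a * b) := by
    simp only [f]
    rw [hμ.sum_filter_pos_one_div_sq, hn, doubleStar.biharmonic_eq ha hb]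
    push_cast
    ring
  have hlow : (n : ℝ) ^ 2 + 3 * n + 4 / n - 16 = f (a + b - 1) := by
    simp only [f]
    rw [Nat.cast_sub (by omega), hn]
    push_cast
    field_simp
    ring
  rw [show (n - 1) / 2 = (a + b + 1) / 2 by omega, show (n - 2) / 2 = (a + b) / 2 by omega,
    ← Nat.cast_mul, show n - 3 = a + b - 1 by omega, hBH, hlow]
  refine ⟨hf.le_iff_le.mpr (Nat.add_sub_one_le_mul (by omega) (by omega)),
    hf.le_iff_le.mpr (Nat.mul_le_half_mul_half a b), ?_, ?_⟩
  · rw [hf.injective.eq_iff, Nat.mul_eq_add_sub_one_iff ha hb]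
    omega
  · exact hf.injective.eq_iff.trans (Nat.mul_eq_half_mul_half_iff a b)
end

section
/- Let F_{s,0,n−2s−1} be the firefly graph with s ≥ 1 triangles, no pendant paths of length 2, and n − 2s − 1 pendant edges, on n ≥ 7 vertices. Then the characteristic polynomial of its Laplacian matrix is x(x−n)(x−3)^s(x−1)^{n−s−2}, so BH(F_{s,0,n−2s−1}) = n² − (8/9)sn − 2n + 1/n. Consequently: if n is odd then 5n²/9 − 14n/9 + 1/n ≤ BH(F_{s,0,n−2s−1}) ≤ n² − 26n/9 + 1/n, with the upper bound attained exactly at s = 1 and the lower bound exactly at s = (n−1)/2; if n is even then 5n²/9 − 10n/9 + 1/n ≤ BH(F_{s,0,n−2s−1}) ≤ n² − 26n/9 + 1/n, with the upper bound attained exactly at s = 1 and the lower bound exactly at s = (n−2)/2. -/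
open Finset Polynomial

/-- The firefly graph `F_{s,t,k}` on `2s + 2t + k + 1` vertices: vertex `0` is the common
vertex; for each `i` with `1 ≤ i ≤ s` the vertices `2i-1, 2i` together with `0` form a
triangle; for each `j` with `1 ≤ j ≤ t` the vertices `2s+2j-1, 2s+2j` form a pendant path
of length 2 attached at `0` (with `2s+2j-1` the middle vertex); and the `k` vertices
`2s+2t+1, …, 2s+2t+k` are pendant neighbours of `0`. -/
def firefly (s t k : ℕ) : SimpleGraph (Fin (2 * s + 2 * t + k + 1)) :=
  SimpleGraph.fromRel (fun u v =>
    (u.val = 0 ∧ 1 ≤ v.val ∧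
      (v.val ≤ 2 * s ∨ (2 * s < v.val ∧ v.val ≤ 2 * s + 2 * t ∧ Odd (v.val - 2 * s)) ∨
        2 * s + 2 * t < v.val)) ∨
    (Odd u.val ∧ u.val ≤ 2 * s ∧ v.val = u.val + 1) ∨
    (2 * s < u.val ∧ u.val ≤ 2 * s + 2 * t ∧ Odd (u.val - 2 * s) ∧ v.val = u.val + 1))

noncomputable instance (s t k : ℕ) : DecidableRel (firefly s t k).Adj :=
  Classical.decRel _


/-
The firefly `F_{s,0,k}` is the cone over `H = sK₂ ∪ kK₁`: ordering its vertices as centre,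
triangles, pendants, its Laplacian is `[[m, -1ᵀ], [-1, D]]` with `m = 2s + k` and
`D = L(H) + 1`, whose rows sum to `1`. Multiplying the characteristic matrix on the right by
`[[X - 1, 0], [-1, 1]]` makes it block triangular, so
`charpoly L · (X - 1) = X (X - n) · charpoly D = X (X - n) ((X - 1)(X - 3))^s (X - 1)^k`.
Hence the nonzero Laplacian eigenvalues are `n`, `3` (`s` times) and `1` (`n - s - 2` times), and
`BH = n (1/n² + s/9 + n - s - 2) = n² - (8/9) s n - 2n + 1/n`. This is strictly decreasing in `s`,
so the bounds are its values at `s = 1` and at the largest `s` allowed by the parity of `n`.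
-/

open Matrix

namespace Matrix

section CommRing

variable {ι o R : Type*} [Fintype ι] [Fintype o] [CommRing R]

/-- For `D = L(H) + 1` this is the Laplacian of the cone over the graph `H`. -/
def coneMatrix (D : Matrix ι ι R) : Matrix (Unit ⊕ ι) (Unit ⊕ ι) R :=
  fromBlocks (of fun _ _ => (Fintype.card ι : R)) (of fun _ _ => -1) (of fun _ _ => -1) D

theorem sum_coneMatrix_row {D : Matrix ι ι R} (hD : ∀ i, ∑ j, D i j = 1) (u : Unit ⊕ ι) :
    ∑ v, coneMatrix D u v = 0 := by
  rcases u with _ | i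
  · simp [coneMatrix, Fintype.sum_sum_type]
  · simp [coneMatrix, Fintype.sum_sum_type, hD]

variable [DecidableEq ι] [DecidableEq o]

theorem charpoly_blockDiagonal (M : o → Matrix ι ι R) :
    (blockDiagonal M).charpoly = ∏ i, (M i).charpoly := by
  have hchar : charmatrix (blockDiagonal M) = blockDiagonal fun i => charmatrix (M i) := by
    ext ⟨a, i⟩ ⟨b, j⟩
    by_cases hij : i = j
    · subst hij
      by_cases hab : a = b
      · subst hab; simp
      · simp [blockDiagonal_apply, hab]
    · simp [blockDiagonal_apply, hij]
  rw [charpoly, hchar, det_blockDiagonal]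
  rfl

theorem sum_charmatrix_row (M : Matrix ι ι R) (i : ι) :
    ∑ j, charmatrix M i j = X - C (∑ j, M i j) := by
  simp [charmatrix_apply, Finset.sum_sub_distrib, diagonal_apply]

theorem det_fromBlocks_ones_mul_of_sum_row_eq (a c : R) (D : Matrix ι ι R)
    (hD : ∀ i, ∑ j, D i j = c) :
    (fromBlocks (of fun _ _ : Unit => a) (of fun _ _ => 1) (of fun _ _ => 1) D).det * c =
      (a * c - Fintype.card ι) * D.det := by
  set P : Matrix (Unit ⊕ ι) (Unit ⊕ ι) R := fromBlocks (of fun _ _ => c) 0 (of fun _ _ => -1) 1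
  have hP : P.det = c := by simp [P]
  have hMP : fromBlocks (of fun _ _ : Unit => a) (of fun _ _ => 1) (of fun _ _ => 1) D * P =
      fromBlocks (of fun _ _ => a * c - Fintype.card ι) (of fun _ _ => 1) 0 D := by
    simp only [P, fromBlocks_multiply]
    congr 1
    · ext; simp [mul_apply, sub_eq_add_neg]
    · ext; simp
    · ext i; simp [mul_apply, hD, Finset.sum_neg_distrib]
    · simp
  calc _ = (fromBlocks (of fun _ _ : Unit => a) (of fun _ _ => 1) (of fun _ _ => 1) D * P).det := by
        rw [det_mul, hP]
    _ = _ := by rw [hMP, det_fromBlocks_zero₂₁, det_unique]; rfl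

theorem charpoly_coneMatrix_mul {D : Matrix ι ι R} (hD : ∀ i, ∑ j, D i j = 1) :
    (coneMatrix D).charpoly * (X - 1) =
      X * (X - C ((Fintype.card ι : R) + 1)) * D.charpoly := by
  have hcorner : charmatrix (of fun _ _ : Unit => (Fintype.card ι : R)) =
      of fun _ _ => X - C (Fintype.card ι : R) := by
    ext; simp
  have hrow : -(of fun (_ : Unit) (_ : ι) => (-1 : R)).map C = of fun _ _ => 1 := by ext; simp
  have hcol : -(of fun (_ : ι) (_ : Unit) => (-1 : R)).map C = of fun _ _ => 1 := by ext; simp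
  rw [charpoly, coneMatrix, charmatrix_fromBlocks, hcorner, hrow, hcol,
    det_fromBlocks_ones_mul_of_sum_row_eq _ (X - 1) _
      (fun i => by rw [sum_charmatrix_row, hD, C_1]),
    charpoly]
  simp only [map_add, map_natCast, C_1]
  ring

end CommRing

theorem eq_of_sum_row_eq_zero_of_offDiag {ι R : Type*} [Fintype ι] [AddCommGroup R]
    {A B : Matrix ι ι R} (hA : ∀ i, ∑ j, A i j = 0) (hB : ∀ i, ∑ j, B i j = 0)
    (h : ∀ i j, i ≠ j → A i j = B i j) : A = B := by
  classical
  have hdiag : ∀ M : Matrix ι ι R, (∀ i, ∑ j, M i j = 0) →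
      ∀ i, M i i = -∑ j ∈ univ.erase i, M i j :=
    fun M hM i => eq_neg_of_add_eq_zero_left (by rw [add_sum_erase _ _ (mem_univ i), hM])
  ext i j
  obtain rfl | hij := eq_or_ne i j
  · rw [hdiag A hA, hdiag B hB, sum_congr rfl fun j hj => h i j (ne_of_mem_erase hj).symm]
  · exact h i j hij

end Matrix

theorem SimpleGraph.sum_lapMatrix_row {V R : Type*} [Fintype V] [DecidableEq V] [CommRing R]
    (G : SimpleGraph V) [DecidableRel G.Adj] (v : V) : ∑ w, G.lapMatrix R v w = 0 := by
  simpa [mulVec, dotProduct] using congrFun (G.lapMatrix_mulVec_const_eq_zero (R := R)) v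

section Firefly
variable (s k : ℕ)

def fireflyVertex : Unit ⊕ ((Fin 2 × Fin s) ⊕ Fin k) → Fin (2 * s + 2 * 0 + k + 1)
  | .inl _ => ⟨0, by omega⟩
  | .inr (.inl (j, i)) => ⟨2 * i + 1 + j, by omega⟩
  | .inr (.inr p) => ⟨2 * s + 1 + p, by omega⟩

theorem fireflyVertex_injective : Function.Injective (fireflyVertex s k) := by
  rintro (_ | ⟨j, i⟩ | p) (_ | ⟨j', i'⟩ | q) h <;>
    simp only [fireflyVertex, Sum.inr.injEq, Sum.inl.injEq, Prod.mk.injEq, reduceCtorEq,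
      Fin.ext_iff] at h ⊢ <;> omega

noncomputable def fireflyEquiv : Unit ⊕ ((Fin 2 × Fin s) ⊕ Fin k) ≃ Fin (2 * s + 2 * 0 + k + 1) :=
  Equiv.ofBijective _ ((Fintype.bijective_iff_injective_and_card _).2
    ⟨fireflyVertex_injective s k, by simp; omega⟩)

/-- `L(sK₂ ∪ kK₁) + 1`. -/
def fireflyConeBlock (R : Type*) [CommRing R] :
    Matrix ((Fin 2 × Fin s) ⊕ Fin k) ((Fin 2 × Fin s) ⊕ Fin k) R :=
  fromBlocks (blockDiagonal fun _ => !![2, -1; -1, 2]) 0 0 1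

variable {s k}
variable {R : Type*} [CommRing R]

theorem firefly_adj_iff (u v : Fin (2 * s + 2 * 0 + k + 1)) :
    (firefly s 0 k).Adj u v ↔ u.val ≠ v.val ∧ (u.val = 0 ∨ v.val = 0 ∨
      (u.val % 2 = 1 ∧ u.val ≤ 2 * s ∧ v.val = u.val + 1) ∨
      (v.val % 2 = 1 ∧ v.val ≤ 2 * s ∧ u.val = v.val + 1)) := by
  rw [firefly, SimpleGraph.fromRel_adj, ne_eq, Fin.ext_iff]
  simp only [Nat.odd_iff]
  omega

theorem lapMatrix_firefly_apply_of_ne {u v : Unit ⊕ ((Fin 2 × Fin s) ⊕ Fin k)} (huv : u ≠ v) :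
    (firefly s 0 k).lapMatrix R (fireflyVertex s k u) (fireflyVertex s k v) =
      coneMatrix (fireflyConeBlock s k R) u v := by
  rw [SimpleGraph.lapMatrix, Matrix.sub_apply, SimpleGraph.degMatrix,
    diagonal_apply_ne _ ((fireflyVertex_injective s k).ne huv), SimpleGraph.adjMatrix_apply,
    zero_sub]
  by_cases hadj : (firefly s 0 k).Adj (fireflyVertex s k u) (fireflyVertex s k v)
  all_goals
    simp only [hadj, if_true, if_false, neg_zero]
    rw [firefly_adj_iff] at hadj
    rcases u with _ | ⟨j, i⟩ | p <;> rcases v with _ | ⟨j', i'⟩ | q <;>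
      simp only [fireflyVertex, coneMatrix, fireflyConeBlock, fromBlocks_apply₁₁,
        fromBlocks_apply₁₂, fromBlocks_apply₂₁, fromBlocks_apply₂₂, blockDiagonal_apply, one_apply, Matrix.zero_apply,
        of_apply, ne_eq, Sum.inl.injEq, Sum.inr.injEq, Prod.mk.injEq, Fin.ext_iff,
        not_true_eq_false, true_or, or_true, and_true] at hadj huv ⊢
  all_goals first
    | omega
    | simp [huv]; done
    | split_ifs <;> fin_cases j <;> fin_cases j' <;> simp at * <;> omega

theorem sum_fireflyConeBlock_row (i : (Fin 2 × Fin s) ⊕ Fin k) :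
    ∑ j, fireflyConeBlock s k R i j = 1 := by
  rcases i with ⟨a, i⟩ | p
  · rw [Fintype.sum_sum_type, Fintype.sum_prod_type]
    fin_cases a <;> simp [fireflyConeBlock, blockDiagonal_apply, Fin.sum_univ_two] <;> norm_num
  · simp [Fintype.sum_sum_type, fireflyConeBlock, one_apply]

theorem lapMatrix_firefly :
    (firefly s 0 k).lapMatrix R =
      reindex (fireflyEquiv s k) (fireflyEquiv s k) (coneMatrix (fireflyConeBlock s k R)) := by
  rw [← Equiv.symm_apply_eq, reindex_symm, reindex_apply, Equiv.symm_symm]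
  refine eq_of_sum_row_eq_zero_of_offDiag (fun u => ?_)
    (sum_coneMatrix_row sum_fireflyConeBlock_row)
    fun u v huv => lapMatrix_firefly_apply_of_ne huv
  rw [← SimpleGraph.sum_lapMatrix_row (R := R) (firefly s 0 k) (fireflyEquiv s k u)]
  exact Equiv.sum_comp (fireflyEquiv s k) ((firefly s 0 k).lapMatrix R (fireflyEquiv s k u))

theorem charpoly_fireflyConeBlock :
    (fireflyConeBlock s k R).charpoly = ((X - 1) * (X - C 3)) ^ s * (X - 1) ^ k := by
  have htri : (!![2, -1; -1, 2] : Matrix (Fin 2) (Fin 2) R).charpoly = (X - 1) * (X - C 3) := by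
    rw [charpoly, det_fin_two]
    simp [map_ofNat C]
    ring
  rw [fireflyConeBlock, charpoly_fromBlocks_zero₁₂, charpoly_blockDiagonal, htri, prod_const,
    charpoly_one, card_univ, Fintype.card_fin, Fintype.card_fin]

theorem charpoly_lapMatrix_firefly [IsDomain R] (hsk : 1 ≤ s + k) :
    ((firefly s 0 k).lapMatrix R).charpoly =
      X * (X - C ((2 * s + k + 1 : ℕ) : R)) * (X - C 3) ^ s * (X - 1) ^ (s + k - 1) := by
  refine mul_right_cancel₀ (X_sub_C_ne_zero (1 : R)) ?_
  rw [C_1, lapMatrix_firefly, charpoly_reindex, charpoly_coneMatrix_mul sum_fireflyConeBlock_row,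
    charpoly_fireflyConeBlock]
  obtain ⟨m, hm⟩ : ∃ m, s + k = m + 1 := ⟨s + k - 1, by omega⟩
  have hpow : (X - 1 : R[X]) ^ s * (X - 1) ^ k = (X - 1) ^ m * (X - 1) := by
    rw [← pow_add, hm, pow_succ]
  simp only [mul_pow, Fintype.card_sum, Fintype.card_prod, Fintype.card_fin,
    show s + k - 1 = m by omega]
  push_cast
  linear_combination X * (X - C (2 * (s : R) + k + 1)) * (X - C 3) ^ s * hpow

end Firefly

section Spectrum
variable {V : Type*} [Fintype V] [DecidableEq V] {G : SimpleGraph V} [DecidableRel G.Adj]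

theorem IsLapEigSeq.map_univ_val_eq_roots {m : ℕ} {μ : Fin m → ℝ} (hμ : IsLapEigSeq G μ) :
    univ.val.map μ = (G.lapMatrix ℝ).charpoly.roots := by
  obtain ⟨-, e, he⟩ := hμ
  rw [(SimpleGraph.posSemidef_lapMatrix (R := ℝ) (G := G)).1.roots_charpoly_eq_eigenvalues,
    ← Multiset.map_univ_val_equiv e, Multiset.map_map]
  congr 1
  funext v
  simp [← he v, lapEigsUnordered]

theorem IsLapEigSeq.apply_zero {m : ℕ} {μ : Fin (m + 1) → ℝ} (hμ : IsLapEigSeq G μ) :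
    μ 0 = 0 := by
  obtain ⟨hmono, e, he⟩ := hμ
  have hA := SimpleGraph.posSemidef_lapMatrix (R := ℝ) (G := G)
  have : Nonempty V := ⟨e.symm 0⟩
  obtain ⟨v, hv⟩ : ∃ v, lapEigsUnordered G v = 0 := by
    have hdet := G.det_lapMatrix_eq_zero
    rw [hA.1.det_eq_prod_eigenvalues] at hdet
    simpa [Finset.prod_eq_zero_iff, lapEigsUnordered] using hdet
  refine le_antisymm ?_ ?_
  · rw [← hv, he]; exact hmono (Fin.zero_le _)
  · rw [← e.apply_symm_apply 0, ← he]; exact hA.eigenvalues_nonneg _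

end Spectrum

theorem sum_inv_sq_eigs_firefly {s k : ℕ} (hsk : 1 ≤ s + k) {μ : Fin (2 * s + 2 * 0 + k + 1) → ℝ}
    (hμ : IsLapEigSeq (firefly s 0 k) μ) :
    ∑ i ∈ univ.filter (fun i => 0 < i.val), 1 / μ i ^ 2 =
      1 / ((2 * s + k + 1 : ℕ) : ℝ) ^ 2 + s / 9 + (s + k - 1 : ℕ) := by
  -- As `1 / 0 ^ 2 = 0` in Lean, the excluded term (`μ 0 = 0`) and the root `0` below contribute 0.
  rw [sum_filter_of_ne fun i _ hi => Nat.pos_of_ne_zero fun h0 => hi ?_]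
  · rw [sum_eq_multiset_sum, ← Function.comp_def (fun x : ℝ => 1 / x ^ 2) μ, ← Multiset.map_map,
      hμ.map_univ_val_eq_roots, charpoly_lapMatrix_firefly hsk, ← C_1]
    have h3 : (X - C 3 : ℝ[X]) ^ s ≠ 0 := pow_ne_zero _ (X_sub_C_ne_zero 3)
    have h1 : (X - C 1 : ℝ[X]) ^ (s + k - 1) ≠ 0 := pow_ne_zero _ (X_sub_C_ne_zero 1)
    have hn : (X * (X - C ((2 * s + k + 1 : ℕ) : ℝ)) : ℝ[X]) ≠ 0 :=
      mul_ne_zero X_ne_zero (X_sub_C_ne_zero _)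
    rw [roots_mul (mul_ne_zero (mul_ne_zero hn h3) h1), roots_mul (mul_ne_zero hn h3),
      roots_mul hn, roots_X, roots_X_sub_C, roots_pow, roots_pow, roots_X_sub_C, roots_X_sub_C]
    norm_num [Multiset.nsmul_singleton]
    ring
  · rw [show i = 0 from Fin.ext h0, hμ.apply_zero]; simp

noncomputable def fireflyBH (n s : ℝ) : ℝ := n ^ 2 - 8 / 9 * s * n - 2 * n + 1 / n

theorem fireflyBH_strictAnti {n : ℝ} (hn : 0 < n) : StrictAnti (fireflyBH n) := fun a b hab => by
  unfold fireflyBH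
  nlinarith

theorem fireflyBH_bounds {n s p : ℕ} (hs : 1 ≤ s) (hp : 2 * s + p ≤ n) :
    fireflyBH n ((n - p) / 2) ≤ fireflyBH n s ∧ fireflyBH n s ≤ fireflyBH n 1 ∧
      (fireflyBH n s = fireflyBH n 1 ↔ s = 1) ∧
      (fireflyBH n s = fireflyBH n ((n - p) / 2) ↔ n = 2 * s + p) := by
  have hf := fireflyBH_strictAnti (n := n) (by norm_cast; omega)
  have hp' : 2 * (s : ℝ) + p ≤ n := by exact_mod_cast hp
  refine ⟨hf.antitone (by linarith), hf.antitone (by exact_mod_cast hs),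
    hf.injective.eq_iff.trans (by norm_cast), hf.injective.eq_iff.trans ?_⟩
  rw [eq_div_iff two_ne_zero]
  constructor
  · intro h; exact_mod_cast (by linarith : (n : ℝ) = 2 * s + p)
  · rintro rfl; push_cast; ring

theorem statement_14_general {n s k : ℕ} (hs : 1 ≤ s) (hk : n = 2 * s + k + 1)
    (μ : Fin (2 * s + 2 * 0 + k + 1) → ℝ) (hμ : IsLapEigSeq (firefly s 0 k) μ) :
    ((firefly s 0 k).lapMatrix ℝ).charpoly =
      X * (X - C (n : ℝ)) * (X - C (3 : ℝ)) ^ s * (X - 1) ^ (n - s - 2) ∧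
    (n : ℝ) * ∑ i ∈ univ.filter (fun i : Fin (2 * s + 2 * 0 + k + 1) => 0 < i.val), 1 / μ i ^ 2 = (n : ℝ) ^ 2 - (8 / 9) * (s : ℝ) * (n : ℝ) - 2 * (n : ℝ) + 1 / (n : ℝ) ∧
    (Odd n →
      (5 * (n : ℝ) ^ 2 / 9 - 14 * (n : ℝ) / 9 + 1 / (n : ℝ) ≤ (n : ℝ) * ∑ i ∈ univ.filter (fun i : Fin (2 * s + 2 * 0 + k + 1) => 0 < i.val), 1 / μ i ^ 2 ∧
       (n : ℝ) * ∑ i ∈ univ.filter (fun i : Fin (2 * s + 2 * 0 + k + 1) => 0 < i.val), 1 / μ i ^ 2 ≤ (n : ℝ) ^ 2 - 26 * (n : ℝ) / 9 + 1 / (n : ℝ) ∧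
       ((n : ℝ) * ∑ i ∈ univ.filter (fun i : Fin (2 * s + 2 * 0 + k + 1) => 0 < i.val), 1 / μ i ^ 2 = (n : ℝ) ^ 2 - 26 * (n : ℝ) / 9 + 1 / (n : ℝ) ↔ s = 1) ∧
       ((n : ℝ) * ∑ i ∈ univ.filter (fun i : Fin (2 * s + 2 * 0 + k + 1) => 0 < i.val), 1 / μ i ^ 2 = 5 * (n : ℝ) ^ 2 / 9 - 14 * (n : ℝ) / 9 + 1 / (n : ℝ) ↔ n = 2 * s + 1))) ∧
    (Even n →
      (5 * (n : ℝ) ^ 2 / 9 - 10 * (n : ℝ) / 9 + 1 / (n : ℝ) ≤ (n : ℝ) * ∑ i ∈ univ.filter (fun i : Fin (2 * s + 2 * 0 + k + 1) => 0 < i.val), 1 / μ i ^ 2 ∧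
       (n : ℝ) * ∑ i ∈ univ.filter (fun i : Fin (2 * s + 2 * 0 + k + 1) => 0 < i.val), 1 / μ i ^ 2 ≤ (n : ℝ) ^ 2 - 26 * (n : ℝ) / 9 + 1 / (n : ℝ) ∧
       ((n : ℝ) * ∑ i ∈ univ.filter (fun i : Fin (2 * s + 2 * 0 + k + 1) => 0 < i.val), 1 / μ i ^ 2 = (n : ℝ) ^ 2 - 26 * (n : ℝ) / 9 + 1 / (n : ℝ) ↔ s = 1) ∧
       ((n : ℝ) * ∑ i ∈ univ.filter (fun i : Fin (2 * s + 2 * 0 + k + 1) => 0 < i.val), 1 / μ i ^ 2 = 5 * (n : ℝ) ^ 2 / 9 - 10 * (n : ℝ) / 9 + 1 / (n : ℝ) ↔ n = 2 * s + 2))) := by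
  have hsk : 1 ≤ s + k := by omega
  have hBH : (n : ℝ) * ∑ i ∈ univ.filter (fun i : Fin (2 * s + 2 * 0 + k + 1) => 0 < i.val),
      1 / μ i ^ 2 = fireflyBH n s := by
    have hn0 : (n : ℝ) ≠ 0 := by norm_cast; omega
    rw [sum_inv_sq_eigs_firefly hsk hμ, ← hk, Nat.cast_sub hsk, fireflyBH]
    field_simp
    push_cast [hk]
    ring
  have hmax : (n : ℝ) ^ 2 - 26 * n / 9 + 1 / n = fireflyBH n 1 := by unfold fireflyBH; ring
  refine ⟨?_, hBH, fun hodd => ?_, fun heven => ?_⟩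
  · rw [charpoly_lapMatrix_firefly hsk, ← hk, show s + k - 1 = n - s - 2 by omega]
  · have hmin : 5 * (n : ℝ) ^ 2 / 9 - 14 * n / 9 + 1 / n = fireflyBH n ((n - (1 : ℕ)) / 2) := by
      unfold fireflyBH; push_cast; ring
    rw [hBH, hmax, hmin]
    exact fireflyBH_bounds hs (by obtain ⟨t, ht⟩ := hodd; omega)
  · have hmin : 5 * (n : ℝ) ^ 2 / 9 - 10 * n / 9 + 1 / n = fireflyBH n ((n - (2 : ℕ)) / 2) := by
      unfold fireflyBH; push_cast; ring
    rw [hBH, hmax, hmin]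
    exact fireflyBH_bounds hs (by obtain ⟨t, ht⟩ := heven; omega)

theorem statement_14 {n s k : ℕ} (hn : 7 ≤ n) (hs : 1 ≤ s) (hk : n = 2 * s + k + 1)
    (μ : Fin (2 * s + 2 * 0 + k + 1) → ℝ) (hμ : IsLapEigSeq (firefly s 0 k) μ) :
    ((firefly s 0 k).lapMatrix ℝ).charpoly =
      X * (X - C (n : ℝ)) * (X - C (3 : ℝ)) ^ s * (X - 1) ^ (n - s - 2) ∧
    (n : ℝ) * ∑ i ∈ univ.filter (fun i : Fin (2 * s + 2 * 0 + k + 1) => 0 < i.val), 1 / μ i ^ 2 = (n : ℝ) ^ 2 - (8 / 9) * (s : ℝ) * (n : ℝ) - 2 * (n : ℝ) + 1 / (n : ℝ) ∧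
    (Odd n →
      (5 * (n : ℝ) ^ 2 / 9 - 14 * (n : ℝ) / 9 + 1 / (n : ℝ) ≤ (n : ℝ) * ∑ i ∈ univ.filter (fun i : Fin (2 * s + 2 * 0 + k + 1) => 0 < i.val), 1 / μ i ^ 2 ∧
       (n : ℝ) * ∑ i ∈ univ.filter (fun i : Fin (2 * s + 2 * 0 + k + 1) => 0 < i.val), 1 / μ i ^ 2 ≤ (n : ℝ) ^ 2 - 26 * (n : ℝ) / 9 + 1 / (n : ℝ) ∧
       ((n : ℝ) * ∑ i ∈ univ.filter (fun i : Fin (2 * s + 2 * 0 + k + 1) => 0 < i.val), 1 / μ i ^ 2 = (n : ℝ) ^ 2 - 26 * (n : ℝ) / 9 + 1 / (n : ℝ) ↔ s = 1) ∧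
       ((n : ℝ) * ∑ i ∈ univ.filter (fun i : Fin (2 * s + 2 * 0 + k + 1) => 0 < i.val), 1 / μ i ^ 2 = 5 * (n : ℝ) ^ 2 / 9 - 14 * (n : ℝ) / 9 + 1 / (n : ℝ) ↔ n = 2 * s + 1))) ∧
    (Even n →
      (5 * (n : ℝ) ^ 2 / 9 - 10 * (n : ℝ) / 9 + 1 / (n : ℝ) ≤ (n : ℝ) * ∑ i ∈ univ.filter (fun i : Fin (2 * s + 2 * 0 + k + 1) => 0 < i.val), 1 / μ i ^ 2 ∧
       (n : ℝ) * ∑ i ∈ univ.filter (fun i : Fin (2 * s + 2 * 0 + k + 1) => 0 < i.val), 1 / μ i ^ 2 ≤ (n : ℝ) ^ 2 - 26 * (n : ℝ) / 9 + 1 / (n : ℝ) ∧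
       ((n : ℝ) * ∑ i ∈ univ.filter (fun i : Fin (2 * s + 2 * 0 + k + 1) => 0 < i.val), 1 / μ i ^ 2 = (n : ℝ) ^ 2 - 26 * (n : ℝ) / 9 + 1 / (n : ℝ) ↔ s = 1) ∧
       ((n : ℝ) * ∑ i ∈ univ.filter (fun i : Fin (2 * s + 2 * 0 + k + 1) => 0 < i.val), 1 / μ i ^ 2 = 5 * (n : ℝ) ^ 2 / 9 - 10 * (n : ℝ) / 9 + 1 / (n : ℝ) ↔ n = 2 * s + 2))) :=
  statement_14_general hs hk μ hμ
end

section
/- Let G_1 and G_2 be connected simple graphs on n_1 and n_2 vertices with Laplacian eigenvalues 0 = λ_1(G_1) < λ_2(G_1) ≤ ... ≤ λ_{n_1}(G_1) and 0 = λ_1(G_2) < λ_2(G_2) ≤ ... ≤ λ_{n_2}(G_2), and let d_{G_1}(u_i) denote the degree of vertex u_i in G_1. Then the lexicographic product G_1[G_2] satisfies BH(G_1[G_2]) = n_1·n_2·(Σ_{i=2}^{n_1} 1/(n_2² λ_i(G_1)²) + Σ_{j=2}^{n_2} Σ_{i=1}^{n_1} 1/(λ_j(G_2) + d_{G_1}(u_i)·n_2)²).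 -/
open Finset Polynomial

/-- The lexicographic product `G₁[G₂]`: vertices `(u₁, v₁)` and `(u₂, v₂)` are adjacent
iff `u₁ u₂ ∈ E(G₁)`, or `u₁ = u₂` and `v₁ v₂ ∈ E(G₂)`. -/
def lexProd {α β : Type*} (G₁ : SimpleGraph α) (G₂ : SimpleGraph β) :
    SimpleGraph (α × β) :=
  SimpleGraph.fromRel (fun u v => G₁.Adj u.1 v.1 ∨ (u.1 = v.1 ∧ G₂.Adj u.2 v.2))

noncomputable instance {α β : Type*} (G₁ : SimpleGraph α) (G₂ : SimpleGraph β) :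
    DecidableRel (lexProd G₁ G₂).Adj :=
  Classical.decRel _

/-!
The Laplacian of `G₁[G₂]` is `L = n₂ (D₁ ⊗ I) + I ⊗ L₂ - A₁ ⊗ J`, where `J` is the all-ones
matrix. Since `G₂` is connected, the kernel of `L₂` is spanned by the constant vector `𝟙`, and we
may take an orthonormal eigenbasis `{w_j}` of `L₂` with `w_{j₂} ∥ 𝟙`; then `J w_{j₂} = n₂ w_{j₂}`
and `J w_j = 0` for `j ≠ j₂`. Together with an orthonormal eigenbasis `{x_i}` of `L₁`, the
orthonormal basis `{x_i ⊗ w_{j₂}} ∪ {e_i ⊗ w_j : j ≠ j₂}` diagonalizes `L`, with eigenvalues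
`n₂ λ_i(G₁)` and `λ_j(G₂) + n₂ d_{G₁}(u_i)`. The biharmonic sums then only need the index of the
unique zero eigenvalue of a connected graph, and `1 / 0 ^ 2 = 0` lets the sums over `λ_i(G₁)` and
over the spectrum of `G₁[G₂]` run over all eigenvalues.
-/

open Matrix Kronecker

namespace Matrix

section Spectrum

variable {n : Type*} [Fintype n] [DecidableEq n]

theorem IsHermitian.mul_eigenvectorUnitary {A : Matrix n n ℝ} (hA : A.IsHermitian) :
    A * hA.eigenvectorUnitary = hA.eigenvectorUnitary * diagonal hA.eigenvalues := by
  have h := congr((hA.eigenvectorUnitary : Matrix n n ℝ) *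
    $(hA.conjStarAlgAut_star_eigenvectorUnitary))
  simpa [Unitary.conjStarAlgAut_star_apply, ← mul_assoc] using h

theorem IsHermitian.transpose_eigenvectorUnitary_mul {A : Matrix n n ℝ} (hA : A.IsHermitian) :
    (hA.eigenvectorUnitary : Matrix n n ℝ)ᵀ * hA.eigenvectorUnitary = 1 := by
  simpa [star_eq_conjTranspose] using Unitary.coe_star_mul_self hA.eigenvectorUnitary

theorem IsHermitian.map_eigenvalues_eq_of_mul_eq_mul_diagonal {A P : Matrix n n ℝ}
    (hA : A.IsHermitian) (hP : Pᵀ * P = 1) {d : n → ℝ} (h : A * P = P * diagonal d) :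
    univ.val.map hA.eigenvalues = univ.val.map d := by
  have hA' : A = P * (diagonal d * Pᵀ) := by
    rw [← mul_assoc, ← h, mul_assoc, mul_eq_one_comm.mp hP, mul_one]
  have hchar : A.charpoly = (diagonal d).charpoly := by
    rw [hA', charpoly_mul_comm, mul_assoc, hP, mul_one]
  have := congrArg Polynomial.roots hchar
  rw [hA.roots_charpoly_eq_eigenvalues, charpoly_diagonal, Polynomial.roots_prod] at this
  · simpa using this
  · simp [Finset.prod_ne_zero_iff, Polynomial.X_sub_C_ne_zero]

end Spectrum

section BlockEigenvectors

variable {α β R : Type*} [Fintype α] [DecidableEq α] [Fintype β] [DecidableEq β] [CommRing R]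

/-- For a projection `S` onto some columns of `U₂`, the columns of this matrix are `u ⊗ w` for
`u` a column of `U₁` and `w` a column of `U₂ S`, and `e ⊗ w` for `e` a standard basis vector and
`w` a column of `U₂ (1 - S)`. -/
def blockEigenvectors (U₁ : Matrix α α R) (U₂ S : Matrix β β R) :
    Matrix (α × β) (α × β) R :=
  U₁ ⊗ₖ (U₂ * S) + 1 ⊗ₖ (U₂ * (1 - S))

theorem transpose_blockEigenvectors_mul_self {U₁ : Matrix α α R} {U₂ S : Matrix β β R}
    (h₁ : U₁ᵀ * U₁ = 1) (h₂ : U₂ᵀ * U₂ = 1) (hS : S * S = S) (hSt : Sᵀ = S) :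
    (blockEigenvectors U₁ U₂ S)ᵀ * blockEigenvectors U₁ U₂ S = 1 := by
  simp only [blockEigenvectors, transpose_add, ← kroneckerMap_transpose, transpose_mul,
    transpose_one, transpose_sub, hSt, add_mul, mul_add, ← mul_kronecker_mul, one_mul, mul_one, h₁]
  simp only [mul_assoc, ← mul_assoc _ U₂, h₂, one_mul, mul_sub, sub_mul, hS, mul_one, sub_self,
    sub_zero, kronecker_zero, add_zero, zero_add]
  rw [← kronecker_add, add_sub_cancel, one_kronecker_one]

theorem mul_blockEigenvectors {D A U₁ Λ₁ : Matrix α α R} {L₂ J U₂ Λ₂ S : Matrix β β R} (c : R)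
    (h₁ : (D - A) * U₁ = U₁ * Λ₁) (h₂ : L₂ * U₂ = U₂ * Λ₂) (hJ : J * U₂ = c • (U₂ * S))
    (hS : S * S = S) (hΛS : Λ₂ * S = 0) (hSΛ : S * Λ₂ = 0) :
    (c • (D ⊗ₖ 1) + 1 ⊗ₖ L₂ - A ⊗ₖ J) * blockEigenvectors U₁ U₂ S =
      blockEigenvectors U₁ U₂ S * (c • (Λ₁ ⊗ₖ S) + c • (D ⊗ₖ (1 - S)) + 1 ⊗ₖ Λ₂) := by
  have hDA : D * U₁ = U₁ * Λ₁ + A * U₁ := by rw [← h₁, sub_mul, sub_add_cancel]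
  simp only [blockEigenvectors, add_mul, sub_mul, mul_add, smul_mul_assoc, mul_smul_comm,
    ← mul_kronecker_mul, one_mul, mul_one, ← mul_assoc, h₂, hJ]
  simp only [mul_assoc, mul_sub, sub_mul, hS, hΛS, hSΛ, mul_one, mul_zero, sub_zero, sub_self,
    smul_zero, kronecker_zero, hDA, add_kronecker, smul_add, add_zero, kronecker_smul]
  abel

end BlockEigenvectors

end Matrix

namespace SimpleGraph

section Laplacian

variable {V : Type*} [Fintype V] [DecidableEq V] {G : SimpleGraph V} [DecidableRel G.Adj]

theorem Connected.existsUnique_lapEigsUnordered_eq_zero (hG : G.Connected) :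
    ∃! v, lapEigsUnordered G v = 0 := by
  have hL := (posSemidef_lapMatrix ℝ G).1
  have hcomp : Fintype.card G.ConnectedComponent = 1 :=
    Fintype.card_eq_one_of_forall_eq (i := G.connectedComponentMk hG.nonempty.some)
      fun _ => hG.preconnected.subsingleton_connectedComponent.elim _ _
  have hrank : (G.lapMatrix ℝ).rank + 1 = Fintype.card V := by
    rw [← hcomp, card_connectedComponent_eq_finrank_ker_toLin'_lapMatrix, rank, ← toLin'_apply',
      LinearMap.finrank_range_add_finrank_ker, Module.finrank_fintype_fun_eq_card]
  rw [hL.rank_eq_card_non_zero_eigs, Fintype.card_subtype_compl] at hrank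
  have hzero : Fintype.card {v // hL.eigenvalues v = 0} = 1 := by
    have := Fintype.card_subtype_le (fun v => hL.eigenvalues v = 0)
    omega
  obtain ⟨⟨v, hv⟩, huniq⟩ := Fintype.card_eq_one_iff.mp hzero
  exact ⟨v, hv, fun w hw => congrArg Subtype.val (huniq ⟨w, hw⟩)⟩

theorem Connected.eigenvectorUnitary_apply_eq (hG : G.Connected)
    (hL : (G.lapMatrix ℝ).IsHermitian) {j₀ : V} (hj₀ : hL.eigenvalues j₀ = 0) (v w : V) :
    hL.eigenvectorUnitary v j₀ = hL.eigenvectorUnitary w j₀ := by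
  have h := hL.mulVec_eigenvectorBasis j₀
  rw [hj₀, zero_smul] at h
  exact (lapMatrix_mulVec_eq_zero_iff_forall_reachable G).mp h v w (hG.preconnected v w)

theorem Connected.ones_mul_eigenvectorUnitary (hG : G.Connected)
    (hL : (G.lapMatrix ℝ).IsHermitian) {j₀ : V} (hj₀ : hL.eigenvalues j₀ = 0) :
    of (fun _ _ => (1 : ℝ)) * (hL.eigenvectorUnitary : Matrix V V ℝ) =
      (Fintype.card V : ℝ) •
        ((hL.eigenvectorUnitary : Matrix V V ℝ) * diagonal (Pi.single j₀ 1)) := by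
  set U : Matrix V V ℝ := (hL.eigenvectorUnitary : Matrix V V ℝ)
  have hconst : ∀ v w, U v j₀ = U w j₀ := hG.eigenvectorUnitary_apply_eq hL hj₀
  have horth : ∀ j, ∑ w, U w j₀ * U w j = if j₀ = j then 1 else 0 := fun j => by
    simpa only [mul_apply, transpose_apply, one_apply] using
      congr_fun₂ hL.transpose_eigenvectorUnitary_mul j₀ j
  ext v j
  rw [Matrix.smul_apply, mul_diagonal, mul_apply]
  simp only [of_apply, one_mul, Pi.single_apply, smul_eq_mul]
  have hcol : ∀ j, ∑ w, U w j₀ * U w j = U v j₀ * ∑ w, U w j := fun j => by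
    rw [Finset.mul_sum]
    exact Finset.sum_congr rfl fun w _ => by rw [hconst w v]
  by_cases hj : j = j₀
  · subst hj
    simp [Finset.sum_congr rfl fun w _ => hconst w v]
  · -- the columns of `U` orthogonal to the constant column `j₀` have zero sum
    have hc : U v j₀ ≠ 0 := fun h0 => by simpa [hcol, h0] using horth j₀
    have h := horth j
    rw [hcol, if_neg (Ne.symm hj)] at h
    simp [hj, (mul_eq_zero.mp h).resolve_left hc]

theorem IsLapEigSeq.eq_zero_iff (hG : G.Connected) {n : ℕ} {μ : Fin n → ℝ}
    (hμ : IsLapEigSeq G μ) (i : Fin n) : μ i = 0 ↔ i.val = 0 := by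
  obtain ⟨hmono, e, he⟩ := hμ
  obtain ⟨v₀, hv₀, huniq⟩ := hG.existsUnique_lapEigsUnordered_eq_zero
  have hzero : ∀ i, μ i = 0 ↔ i = e v₀ := fun i => by
    rw [← e.apply_symm_apply i, ← he, e.apply_symm_apply]
    exact ⟨fun h => e.symm_apply_eq.mp (huniq _ h), fun h => e.symm_apply_eq.mpr h ▸ hv₀⟩
  have hfirst : μ ⟨0, (e v₀).pos⟩ = 0 := by
    have hle := hmono (show (⟨0, (e v₀).pos⟩ : Fin n) ≤ e v₀ from Nat.zero_le _)
    have hnonneg := (posSemidef_lapMatrix ℝ G).eigenvalues_nonneg (e.symm ⟨0, (e v₀).pos⟩)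
    rw [(hzero _).mpr rfl] at hle
    rw [← e.apply_symm_apply ⟨0, _⟩, ← he]
    exact le_antisymm (by rwa [he, e.apply_symm_apply]) hnonneg
  rw [hzero, ← (hzero _).mp hfirst, Fin.ext_iff]

theorem IsLapEigSeq.sum_filter_pos (hG : G.Connected) {n : ℕ} {μ : Fin n → ℝ}
    (hμ : IsLapEigSeq G μ) (F : ℝ → ℝ) :
    ∑ i ∈ univ.filter (fun i : Fin n => 0 < i.val), F (μ i) =
      ∑ v ∈ univ.filter (fun v => lapEigsUnordered G v ≠ 0), F (lapEigsUnordered G v) := by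
  obtain ⟨-, e, he⟩ := id hμ
  refine Finset.sum_equiv e.symm (fun i => ?_) (fun i _ => by rw [he, e.apply_symm_apply])
  simp [he, IsLapEigSeq.eq_zero_iff hG hμ, Nat.pos_iff_ne_zero]

end Laplacian

section LexProd

variable {α β : Type*} (G₁ : SimpleGraph α) (G₂ : SimpleGraph β)

theorem lexProd_adj {a b : α × β} :
    (lexProd G₁ G₂).Adj a b ↔ G₁.Adj a.1 b.1 ∨ (a.1 = b.1 ∧ G₂.Adj a.2 b.2) := by
  rw [lexProd, fromRel_adj]
  constructor
  · rintro ⟨-, (h | ⟨h₁, h₂⟩) | (h | ⟨h₁, h₂⟩)⟩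
    exacts [.inl h, .inr ⟨h₁, h₂⟩, .inl h.symm, .inr ⟨h₁.symm, h₂.symm⟩]
  · rintro (h | ⟨h₁, h₂⟩)
    · exact ⟨fun he => h.ne congr(($he).1), .inl (.inl h)⟩
    · exact ⟨fun he => h₂.ne congr(($he).2), .inl (.inr ⟨h₁, h₂⟩)⟩

variable {G₁ G₂} in
theorem Connected.lexProd (h₁ : G₁.Connected) (h₂ : G₂.Connected) :
    (lexProd G₁ G₂).Connected := by
  have : Nonempty (α × β) := ⟨(h₁.nonempty.some, h₂.nonempty.some)⟩
  refine (connected_iff _).mpr ⟨fun ⟨u, v⟩ ⟨u', v'⟩ => ?_, this⟩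
  exact ((h₂.preconnected v v').map
      ⟨fun y => (u, y), fun h => (lexProd_adj G₁ G₂).mpr (.inr ⟨rfl, h⟩)⟩).trans
    ((h₁.preconnected u u').map ⟨fun x => (x, v'), fun h => (lexProd_adj G₁ G₂).mpr (.inl h)⟩)

variable [DecidableEq α] [DecidableRel G₁.Adj] [DecidableRel G₂.Adj]

theorem adjMatrix_lexProd (R : Type*) [NonAssocSemiring R] :
    (lexProd G₁ G₂).adjMatrix R =
      G₁.adjMatrix R ⊗ₖ of (fun _ _ => 1) + 1 ⊗ₖ G₂.adjMatrix R := by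
  ext ⟨u, v⟩ ⟨u', v'⟩
  by_cases h : G₁.Adj u u'
  · simp [lexProd_adj, h, h.ne]
  · by_cases hu : u = u' <;> simp [lexProd_adj, h, hu, one_apply]

variable [Fintype α] [Fintype β] [DecidableEq β]

theorem neighborFinset_lexProd (u : α) (v : β) :
    (lexProd G₁ G₂).neighborFinset (u, v) =
      G₁.neighborFinset u ×ˢ univ ∪ {u} ×ˢ G₂.neighborFinset v := by
  ext ⟨u', v'⟩
  simp [lexProd_adj, eq_comm, and_comm]

theorem degree_lexProd (u : α) (v : β) :
    (lexProd G₁ G₂).degree (u, v) = G₁.degree u * Fintype.card β + G₂.degree v := by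
  rw [← card_neighborFinset_eq_degree, neighborFinset_lexProd, card_union_of_disjoint]
  · simp
  · exact disjoint_product.mpr (.inl (disjoint_singleton_right.mpr (by simp)))

theorem lapMatrix_lexProd :
    (lexProd G₁ G₂).lapMatrix ℝ =
      (Fintype.card β : ℝ) • (G₁.degMatrix ℝ ⊗ₖ 1) + 1 ⊗ₖ G₂.lapMatrix ℝ -
        G₁.adjMatrix ℝ ⊗ₖ of (fun _ _ => 1) := by
  have hdeg : (lexProd G₁ G₂).degMatrix ℝ =
      (Fintype.card β : ℝ) • (G₁.degMatrix ℝ ⊗ₖ 1) + 1 ⊗ₖ G₂.degMatrix ℝ := by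
    ext ⟨u, v⟩ ⟨u', v'⟩
    by_cases hu : u = u' <;> by_cases hv : v = v' <;>
      simp [degMatrix, degree_lexProd, one_apply, hu, hv, mul_comm]
  have hlap : (1 : Matrix α α ℝ) ⊗ₖ G₂.degMatrix ℝ =
      1 ⊗ₖ G₂.lapMatrix ℝ + 1 ⊗ₖ G₂.adjMatrix ℝ := by
    rw [← kronecker_add, lapMatrix, sub_add_cancel]
  rw [lapMatrix, hdeg, hlap, adjMatrix_lexProd]
  abel

variable {G₂} in
theorem map_lapEigsUnordered_lexProd (h₂ : G₂.Connected) {j₂ : β}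
    (hj₂ : lapEigsUnordered G₂ j₂ = 0) :
    univ.val.map (lapEigsUnordered (lexProd G₁ G₂)) = univ.val.map fun p : α × β =>
      if p.2 = j₂ then Fintype.card β * lapEigsUnordered G₁ p.1
      else lapEigsUnordered G₂ p.2 + Fintype.card β * G₁.degree p.1 := by
  set hL₁ := (posSemidef_lapMatrix ℝ G₁).1
  set hL₂ := (posSemidef_lapMatrix ℝ G₂).1
  set S : Matrix β β ℝ := diagonal (Pi.single j₂ 1)
  have hj₂' : hL₂.eigenvalues j₂ = 0 := hj₂
  have hS : S * S = S := by simp [S, diagonal_mul_diagonal, Pi.single_apply]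
  have hΛS : diagonal hL₂.eigenvalues * S = 0 := by
    rw [diagonal_mul_diagonal, ← diagonal_zero]
    congr 1
    ext j
    rcases eq_or_ne j j₂ with rfl | hj
    · simpa using hj₂'
    · simp [hj]
  have hd : (Fintype.card β : ℝ) • (diagonal hL₁.eigenvalues ⊗ₖ S) +
      (Fintype.card β : ℝ) • (G₁.degMatrix ℝ ⊗ₖ (1 - S)) + 1 ⊗ₖ diagonal hL₂.eigenvalues =
        diagonal fun p : α × β => if p.2 = j₂ then Fintype.card β * lapEigsUnordered G₁ p.1
          else lapEigsUnordered G₂ p.2 + Fintype.card β * G₁.degree p.1 := by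
    ext ⟨i, j⟩ ⟨i', j'⟩
    rcases eq_or_ne i i' with rfl | hi <;> rcases eq_or_ne j j' with rfl | hj <;>
      rcases eq_or_ne j j₂ with rfl | hjj₂ <;>
      simp [S, degMatrix, lapEigsUnordered, one_apply, add_comm, *]
  have hP := transpose_blockEigenvectors_mul_self hL₁.transpose_eigenvectorUnitary_mul
    hL₂.transpose_eigenvectorUnitary_mul hS (diagonal_transpose _)
  have hLP := mul_blockEigenvectors _ hL₁.mul_eigenvectorUnitary hL₂.mul_eigenvectorUnitary
    (h₂.ones_mul_eigenvectorUnitary hL₂ hj₂) hS hΛS ((commute_diagonal _ _).eq.trans hΛS)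
  rw [← lapMatrix_lexProd, hd] at hLP
  exact (posSemidef_lapMatrix ℝ _).1.map_eigenvalues_eq_of_mul_eq_mul_diagonal hP hLP

variable {G₂} in
theorem sum_lapEigsUnordered_lexProd (h₂ : G₂.Connected) (f : ℝ → ℝ) :
    ∑ p, f (lapEigsUnordered (lexProd G₁ G₂) p) =
      ∑ i, f (Fintype.card β * lapEigsUnordered G₁ i) +
        ∑ j ∈ univ.filter (fun j => lapEigsUnordered G₂ j ≠ 0),
          ∑ i, f (lapEigsUnordered G₂ j + Fintype.card β * G₁.degree i) := by
  obtain ⟨j₂, hj₂, huniq⟩ := h₂.existsUnique_lapEigsUnordered_eq_zero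
  have hspec := congrArg (fun s => (s.map f).sum) (map_lapEigsUnordered_lexProd G₁ h₂ hj₂)
  simp only [Multiset.map_map, Function.comp_def, ← Finset.sum_eq_multiset_sum] at hspec
  have hcompl : univ.filter (fun j => lapEigsUnordered G₂ j ≠ 0) = {j₂}ᶜ := by
    ext j
    simp only [mem_filter, mem_univ, true_and, mem_compl, mem_singleton]
    exact ⟨fun h hj => h (hj ▸ hj₂), (huniq j).mt⟩
  rw [hspec, Fintype.sum_prod_type_right, Fintype.sum_eq_add_sum_compl j₂, hcompl]
  refine congrArg₂ (· + ·) (by simp) (Finset.sum_congr rfl fun j hj => ?_)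
  simp [(mem_compl.mp hj |> mt mem_singleton.mpr)]

end LexProd

end SimpleGraph

open SimpleGraph in
theorem statement_19 {n₁ n₂ : ℕ}
    (G₁ : SimpleGraph (Fin n₁)) [DecidableRel G₁.Adj] (hG₁ : G₁.Connected)
    (G₂ : SimpleGraph (Fin n₂)) [DecidableRel G₂.Adj] (hG₂ : G₂.Connected)
    (μ₁ : Fin n₁ → ℝ) (hμ₁ : IsLapEigSeq G₁ μ₁)
    (μ₂ : Fin n₂ → ℝ) (hμ₂ : IsLapEigSeq G₂ μ₂)
    (ν : Fin (n₁ * n₂) → ℝ) (hν : IsLapEigSeq (lexProd G₁ G₂) ν) :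
    ((n₁ : ℝ) * n₂) * ∑ l ∈ univ.filter (fun l : Fin (n₁ * n₂) => 0 < l.val), 1 / ν l ^ 2 =
      ((n₁ : ℝ) * n₂) *
        ((∑ i ∈ univ.filter (fun i : Fin n₁ => 0 < i.val), 1 / ((n₂ : ℝ) ^ 2 * μ₁ i ^ 2)) +
          ∑ j ∈ univ.filter (fun j : Fin n₂ => 0 < j.val),
            ∑ i : Fin n₁, 1 / (μ₂ j + (G₁.degree i : ℝ) * n₂) ^ 2) := by
  have hg : ∀ x : ℝ, 1 / x ^ 2 ≠ 0 → x ≠ 0 := by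
    rintro x hx rfl
    simp at hx
  congr 1
  rw [IsLapEigSeq.sum_filter_pos (hG₁.lexProd hG₂) hν (fun x => 1 / x ^ 2),
    sum_filter_of_ne fun p _ => hg _, sum_lapEigsUnordered_lexProd G₁ hG₂ fun x => 1 / x ^ 2,
    Fintype.card_fin]
  congr 1
  · simp_rw [← mul_pow]
    rw [IsLapEigSeq.sum_filter_pos hG₁ hμ₁ (fun x => 1 / ((n₂ : ℝ) * x) ^ 2),
      sum_filter_of_ne fun v _ hv => right_ne_zero_of_mul (hg _ hv)]
  · simp_rw [mul_comm _ (n₂ : ℝ)]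
    exact (IsLapEigSeq.sum_filter_pos hG₂ hμ₂ fun t => ∑ i, 1 / (t + n₂ * G₁.degree i) ^ 2).symm
end
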